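/- arXiv:1212.5942 — 2 statements merged into one kernel-verified Lean document; each statement's English description precedes it below -/
import Mathlib

section
/- Let H be a real Hilbert space, let m ≥ 1, for every i ∈ {1,…,m} let A_i : H → 2^H be maximally monotone, let B : H → H be β-cocoercive for some β > 0, and assume there exists x ∈ H with 0 ∈ Σ_{i=1}^m A_i x + Bx. Let (ω_i)_{1≤i≤m} be real numbers in (0,1) with Σ_{i=1}^m ω_i = 1, let γ ∈ (0, 2β), set α = max{2/3, 2γ/(γ+2β)}, let (λ_n) be a sequence in (0, 1/α), let (a_n) and (b_{i,n}) (i = 1,…,m) be sequences in H with Σ_n λ_n(1−αλ_n) = +∞ and Σ_n λ_n(‖a_n‖ + ‖b_{i,n}‖) < +∞ for every i. Let (z_{i,0})_{1≤i≤m} ∈ H^m and for every n ∈ ℕ set x_n = Σ_{i=1}^m ω_i z_{i,n}, and for i = 1,…,m: s_{i,n} = 2x_n − z_{i,n} − γ(Bx_n + a_n), p_{i,n} = J_{(γ/ω_i) A_i} s_{i,n} + b_{i,n}, z_{i,n+1} = z_{i,n} + λ_n(p_{i,n} − x_n). Then there exists x̄ ∈ H with 0 ∈ Σ_{i=1}^m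 A_i x̄ + Bx̄ such that x_n converges weakly to x̄, Bx_n converges strongly to Bx̄, and x_{n+1} − x_n → 0 strongly. -/
/-!
Give `Hᵐ` the norm `(∑ ωᵢ ‖zᵢ‖²)^½` and let `T` be the generalized forward–backward operator
`(T z)ᵢ = zᵢ + J_{(γ/ωᵢ)Aᵢ}(2x - zᵢ - γBx) - x`, where `x = ∑ ωᵢ zᵢ`; the algorithm is the inexact
relaxed iteration `zₙ₊₁ = zₙ + λₙ (T zₙ - zₙ + eₙ)` with summable errors. Summing the firm
nonexpansiveness inequalities of the resolvents with weights `ωᵢ` and adding the cocoercivity of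
`B` gives one fundamental inequality. Since `γ ≤ 2β(2 - 1/α)`, it shows that `T` is `α`-averaged,
so the algorithm is a Krasnosel'skiĭ–Mann iteration of a nonexpansive map with relaxations `αλₙ`.
Its iterates are quasi-Fejér with respect to `Fix T`, its residuals tend to `0` because
`∑ αλₙ(1 - αλₙ) = ∞`, and Opial's lemma gives weak convergence to a fixed point `z̄`, whose mean
`x̄` is a zero of `∑ Aᵢ + B`. The fundamental inequality between `zₙ` and `z̄` then bounds
`γβ ‖Bxₙ - Bx̄‖²` by quantities that vanish with the residual.
-/

open Filter Topology
open scoped RealInnerProductSpace Pointwise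

variable {H : Type*} [NormedAddCommGroup H] [InnerProductSpace ℝ H] [CompleteSpace H]

/-- A set-valued operator `A : H → 2^H` is monotone. -/
def IsMonotoneOp (A : H → Set H) : Prop :=
  ∀ x y u v : H, u ∈ A x → v ∈ A y → 0 ≤ ⟪x - y, u - v⟫

/-- A set-valued operator is maximally monotone: it is monotone and its graph is not
properly contained in the graph of any monotone operator. -/
def IsMaxMonotoneOp (A : H → Set H) : Prop :=
  IsMonotoneOp A ∧ ∀ x u : H, (∀ y v : H, v ∈ A y → 0 ≤ ⟪x - y, u - v⟫) → u ∈ A x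

/-- The normal cone to a closed vector subspace `V`: it maps `x ∈ V` to `Vᗮ`
and `x ∉ V` to `∅`. -/
def normalConeSub (V : Submodule ℝ H) : H → Set H :=
  fun x => {w | x ∈ V ∧ w ∈ Vᗮ}

/-- `z n` converges weakly to `w`. -/
def WeakLim (z : ℕ → H) (w : H) : Prop :=
  ∀ y : H, Tendsto (fun n => ⟪z n, y⟫) atTop (nhds ⟪w, y⟫)

/-- The partial inverse of a set-valued operator `M` with respect to a subspace with
orthogonal projection `P` (so that `P_{V⊥} = id - P`):
`y ∈ M_V x ↔ P_V y + P_{V⊥} x ∈ M (P_V x + P_{V⊥} y)`. -/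
def partialInvOp (P : H → H) (M : H → Set H) : H → Set H :=
  fun x => {y | P y + (x - P x) ∈ M (P x + (y - P y))}

section RealSequences

theorem exists_tendsto_of_le_add_summable {a ε : ℕ → ℝ} (ha : ∀ n, 0 ≤ a n)
    (hε : ∀ n, 0 ≤ ε n) (hsum : Summable ε) (hrec : ∀ n, a (n + 1) ≤ a n + ε n) :
    ∃ l, Tendsto a atTop (𝓝 l) := by
  set b : ℕ → ℝ := fun n => a n - ∑ k ∈ Finset.range n, ε k
  have hanti : Antitone b := antitone_nat_of_succ_le fun n => by
    simp only [b, Finset.sum_range_succ]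
    linarith [hrec n]
  have hbdd : BddBelow (Set.range b) := ⟨-∑' k, ε k, by
    rintro _ ⟨n, rfl⟩
    linarith [ha n, hsum.sum_le_tsum (Finset.range n) fun k _ => hε k]⟩
  refine ⟨(⨅ n, b n) + ∑' k, ε k, ?_⟩
  convert (tendsto_atTop_ciInf hanti hbdd).add hsum.hasSum.tendsto_sum_nat using 1
  ext n
  simp [b]

theorem summable_of_le_sub_succ_add {t a ε : ℕ → ℝ} (ht : ∀ n, 0 ≤ t n) (ha : ∀ n, 0 ≤ a n)
    (hε : ∀ n, 0 ≤ ε n) (hsum : Summable ε) (h : ∀ n, t n ≤ a n - a (n + 1) + ε n) :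
    Summable t := by
  refine summable_of_sum_range_le (c := a 0 + ∑' k, ε k) ht fun n => ?_
  calc ∑ k ∈ Finset.range n, t k
      ≤ ∑ k ∈ Finset.range n, (a k - a (k + 1) + ε k) := Finset.sum_le_sum fun k _ => h k
    _ = a 0 - a n + ∑ k ∈ Finset.range n, ε k := by
      rw [Finset.sum_add_distrib, Finset.sum_range_sub']
    _ ≤ a 0 + ∑' k, ε k := by
      linarith [ha n, hsum.sum_le_tsum (Finset.range n) fun k _ => hε k]

theorem eq_zero_of_tendsto_of_summable_mul_sq {c μ : ℕ → ℝ} {L : ℝ} (hc : ∀ n, 0 ≤ c n)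
    (hlim : Tendsto c atTop (𝓝 L)) (hμ : ∀ n, 0 ≤ μ n) (hdiv : ¬Summable μ)
    (hsum : Summable fun n => μ n * c n ^ 2) : L = 0 := by
  have hL : 0 ≤ L := ge_of_tendsto' hlim hc
  by_contra hL0
  have hpos : 0 < L ^ 2 / 4 := by positivity
  have hev : ∀ᶠ n in atTop, L ^ 2 / 4 < c n ^ 2 :=
    (hlim.pow 2).eventually (lt_mem_nhds (by nlinarith [lt_of_le_of_ne hL (Ne.symm hL0)]))
  apply hdiv
  refine (summable_mul_left_iff hpos.ne').mp ?_
  refine Summable.of_norm_bounded_eventually_nat hsum ?_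
  filter_upwards [hev] with n hn
  rw [Real.norm_of_nonneg (mul_nonneg hpos.le (hμ n)), mul_comm]
  exact mul_le_mul_of_nonneg_left hn.le (hμ n)

theorem tendsto_zero_of_mul_sq_le_add_mul {l : Filter ℕ} {t a b : ℕ → ℝ} {c : ℝ} (hc : 0 < c)
    (ht : ∀ n, 0 ≤ t n) (h : ∀ n, c * t n ^ 2 ≤ a n + b n * t n)
    (ha : Tendsto a l (𝓝 0)) (hb : Tendsto b l (𝓝 0)) : Tendsto t l (𝓝 0) := by
  have hbound : ∀ n, t n ≤ |b n| / c + √(|a n| / c) := by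
    intro n
    by_contra! hlt
    set r := √(|a n| / c)
    have hr : c * (r * r) = |a n| := by
      rw [← sq, Real.sq_sqrt (div_nonneg (abs_nonneg _) hc.le), mul_div_cancel₀ _ hc.ne']
    have htpos : 0 < c * t n := mul_pos hc ((by positivity : 0 ≤ |b n| / c + r).trans_lt hlt)
    have h1 := mul_lt_mul_of_pos_left hlt htpos
    have h2 : c * r * r ≤ c * t n * r :=
      mul_le_mul_of_nonneg_right (mul_le_mul_of_nonneg_left (by
        linarith [div_nonneg (abs_nonneg (b n)) hc.le]) hc.le) (Real.sqrt_nonneg _)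
    rw [mul_add, show c * t n * (|b n| / c) = |b n| * t n by field_simp] at h1
    nlinarith [h n, le_abs_self (a n), mul_le_mul_of_nonneg_right (le_abs_self (b n)) (ht n)]
  have hlim : Tendsto (fun n => |b n| / c + √(|a n| / c)) l (𝓝 0) := by
    simpa using (hb.abs.div_const c).add (ha.abs.div_const c).sqrt
  exact squeeze_zero ht hbound hlim

end RealSequences

section KrasnoselskiiMann

variable {E : Type*} [NormedAddCommGroup E] [InnerProductSpace ℝ E] {N : E → E}

theorem norm_sq_add_smul_sub_fixedPoint_le (hN : LipschitzWith 1 N) {f : E} (hf : N f = f)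
    {t : ℝ} (ht : t ∈ Set.Icc (0 : ℝ) 1) (u : E) :
    ‖u + t • (N u - u) - f‖ ^ 2 ≤ ‖u - f‖ ^ 2 - t * (1 - t) * ‖u - N u‖ ^ 2 := by
  have hle : ‖N u - f‖ ^ 2 ≤ ‖u - f‖ ^ 2 := by
    have := hN.norm_sub_le u f
    rw [hf, NNReal.coe_one, one_mul] at this
    gcongr
  have key : ‖u + t • (N u - u) - f‖ ^ 2 = (1 - t) * ‖u - f‖ ^ 2 + t * ‖N u - f‖ ^ 2
      - t * (1 - t) * ‖u - N u‖ ^ 2 := by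
    rw [show u + t • (N u - u) - f = (1 - t) • (u - f) + t • (N u - f) by module,
      show u - N u = (u - f) - (N u - f) by abel]
    simp only [← real_inner_self_eq_norm_sq, inner_add_left, inner_add_right, inner_sub_left,
      inner_sub_right, real_inner_smul_left, real_inner_smul_right, real_inner_comm (u - f)]
    ring
  nlinarith [ht.1]

theorem norm_add_smul_sub_fixedPoint_le (hN : LipschitzWith 1 N) {f : E} (hf : N f = f)
    {t : ℝ} (ht : t ∈ Set.Icc (0 : ℝ) 1) (u : E) : ‖u + t • (N u - u) - f‖ ≤ ‖u - f‖ := by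
  refine (pow_le_pow_iff_left₀ (norm_nonneg _) (norm_nonneg _) two_ne_zero).mp ?_
  linarith [norm_sq_add_smul_sub_fixedPoint_le hN hf ht u,
    mul_nonneg (mul_nonneg ht.1 (sub_nonneg.2 ht.2)) (sq_nonneg ‖u - N u‖)]

variable {μ : ℕ → ℝ} {η ζ : ℕ → E}

theorem km_norm_succ_sub_fixedPoint_le (hN : LipschitzWith 1 N) (hμ : ∀ n, μ n ∈ Set.Icc (0 : ℝ) 1)
    (hζ : ∀ n, ζ (n + 1) = ζ n + μ n • (N (ζ n) - ζ n + η n)) {f : E} (hf : N f = f) (n : ℕ) :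
    ‖ζ (n + 1) - f‖ ≤ ‖ζ n - f‖ + μ n * ‖η n‖ := by
  rw [hζ, show ζ n + μ n • (N (ζ n) - ζ n + η n) - f
    = (ζ n + μ n • (N (ζ n) - ζ n) - f) + μ n • η n by module]
  refine (norm_add_le _ _).trans (add_le_add (norm_add_smul_sub_fixedPoint_le hN hf (hμ n) _) ?_)
  rw [norm_smul, Real.norm_of_nonneg (hμ n).1]

theorem km_exists_tendsto_norm_sub_fixedPoint (hN : LipschitzWith 1 N)
    (hμ : ∀ n, μ n ∈ Set.Icc (0 : ℝ) 1) (hη : Summable fun n => μ n * ‖η n‖)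
    (hζ : ∀ n, ζ (n + 1) = ζ n + μ n • (N (ζ n) - ζ n + η n)) {f : E} (hf : N f = f) :
    ∃ l, Tendsto (fun n => ‖ζ n - f‖) atTop (𝓝 l) :=
  exists_tendsto_of_le_add_summable (fun _ => norm_nonneg _)
    (fun n => mul_nonneg (hμ n).1 (norm_nonneg _)) hη (km_norm_succ_sub_fixedPoint_le hN hμ hζ hf)

theorem km_residual_succ_le (hN : LipschitzWith 1 N) (hμ : ∀ n, μ n ∈ Set.Icc (0 : ℝ) 1)
    (hζ : ∀ n, ζ (n + 1) = ζ n + μ n • (N (ζ n) - ζ n + η n)) (n : ℕ) :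
    ‖ζ (n + 1) - N (ζ (n + 1))‖ ≤ ‖ζ n - N (ζ n)‖ + 2 * (μ n * ‖η n‖) := by
  have hN' : ∀ u v, ‖N u - N v‖ ≤ ‖u - v‖ := fun u v => by
    simpa using hN.norm_sub_le u v
  set v := ζ n + μ n • (N (ζ n) - ζ n)
  have hμη : ‖μ n • η n‖ = μ n * ‖η n‖ := by rw [norm_smul, Real.norm_of_nonneg (hμ n).1]
  have hv : ‖v - N v‖ ≤ ‖ζ n - N (ζ n)‖ := by
    have h1 : ‖N (ζ n) - N v‖ ≤ μ n * ‖ζ n - N (ζ n)‖ := by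
      refine (hN' _ _).trans_eq ?_
      rw [show ζ n - v = μ n • (ζ n - N (ζ n)) by module, norm_smul,
        Real.norm_of_nonneg (hμ n).1]
    calc ‖v - N v‖ = ‖(1 - μ n) • (ζ n - N (ζ n)) + (N (ζ n) - N v)‖ := by congr 1; module
      _ ≤ (1 - μ n) * ‖ζ n - N (ζ n)‖ + μ n * ‖ζ n - N (ζ n)‖ := by
        refine (norm_add_le _ _).trans (add_le_add (le_of_eq ?_) h1)
        rw [norm_smul, Real.norm_of_nonneg (sub_nonneg.2 (hμ n).2)]
      _ = ‖ζ n - N (ζ n)‖ := by ring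
  have hζv : ζ (n + 1) = v + μ n • η n := by rw [hζ]; module
  calc ‖ζ (n + 1) - N (ζ (n + 1))‖ = ‖(v - N v) + μ n • η n + (N v - N (ζ (n + 1)))‖ := by
        rw [hζv]; congr 1; abel
    _ ≤ ‖v - N v‖ + ‖μ n • η n‖ + ‖v - ζ (n + 1)‖ :=
        norm_add₃_le.trans (add_le_add le_rfl (hN' _ _))
    _ ≤ ‖ζ n - N (ζ n)‖ + 2 * (μ n * ‖η n‖) := by
        rw [hζv, sub_add_cancel_left, norm_neg, hμη]
        linarith

theorem km_summable_mul_residual_sq (hN : LipschitzWith 1 N) (hμ : ∀ n, μ n ∈ Set.Icc (0 : ℝ) 1)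
    (hη : Summable fun n => μ n * ‖η n‖)
    (hζ : ∀ n, ζ (n + 1) = ζ n + μ n • (N (ζ n) - ζ n + η n)) {f : E} (hf : N f = f) :
    Summable fun n => μ n * (1 - μ n) * ‖ζ n - N (ζ n)‖ ^ 2 := by
  have hε : ∀ n, 0 ≤ μ n * ‖η n‖ := fun n => mul_nonneg (hμ n).1 (norm_nonneg _)
  obtain ⟨l, hl⟩ := km_exists_tendsto_norm_sub_fixedPoint hN hμ hη hζ hf
  obtain ⟨M, hM⟩ := hl.bddAbove_range
  set S := ∑' n, μ n * ‖η n‖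
  refine summable_of_le_sub_succ_add (a := fun n => ‖ζ n - f‖ ^ 2)
    (ε := fun n => (2 * M + S) * (μ n * ‖η n‖))
    (fun n => mul_nonneg (mul_nonneg (hμ n).1 (sub_nonneg.2 (hμ n).2)) (sq_nonneg _))
    (fun n => sq_nonneg _) (fun n => mul_nonneg ?_ (hε n)) (hη.mul_left _) fun n => ?_
  · linarith [(norm_nonneg _).trans (hM ⟨0, rfl⟩), (hε 0).trans (hη.le_tsum 0 fun k _ => hε k)]
  set v := ζ n + μ n • (N (ζ n) - ζ n)
  have hv := norm_sq_add_smul_sub_fixedPoint_le hN hf (hμ n) (ζ n)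
  have hvM : ‖v - f‖ ≤ M :=
    (norm_add_smul_sub_fixedPoint_le hN hf (hμ n) (ζ n)).trans (hM ⟨n, rfl⟩)
  have hεS : μ n * ‖η n‖ ≤ S := hη.le_tsum n fun k _ => hε k
  have hsucc : ‖ζ (n + 1) - f‖ ≤ ‖v - f‖ + μ n * ‖η n‖ := by
    rw [hζ, show ζ n + μ n • (N (ζ n) - ζ n + η n) - f = (v - f) + μ n • η n by module]
    refine (norm_add_le _ _).trans_eq ?_
    rw [norm_smul, Real.norm_of_nonneg (hμ n).1]
  have hsq : ‖ζ (n + 1) - f‖ ^ 2 ≤ (‖v - f‖ + μ n * ‖η n‖) ^ 2 :=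
    pow_le_pow_left₀ (norm_nonneg _) hsucc 2
  nlinarith [norm_nonneg (v - f), hε n]

theorem km_tendsto_residual (hN : LipschitzWith 1 N) (hμ : ∀ n, μ n ∈ Set.Icc (0 : ℝ) 1)
    (hη : Summable fun n => μ n * ‖η n‖) (hdiv : ¬Summable fun n => μ n * (1 - μ n))
    (hζ : ∀ n, ζ (n + 1) = ζ n + μ n • (N (ζ n) - ζ n + η n)) {f : E} (hf : N f = f) :
    Tendsto (fun n => ‖ζ n - N (ζ n)‖) atTop (𝓝 0) := by
  obtain ⟨L, hL⟩ := exists_tendsto_of_le_add_summable (a := fun n => ‖ζ n - N (ζ n)‖)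
    (fun _ => norm_nonneg _)
    (fun n => mul_nonneg zero_le_two (mul_nonneg (hμ n).1 (norm_nonneg _))) (hη.mul_left 2)
    (km_residual_succ_le hN hμ hζ)
  obtain rfl := eq_zero_of_tendsto_of_summable_mul_sq (fun _ => norm_nonneg _) hL
    (fun n => mul_nonneg (hμ n).1 (sub_nonneg.2 (hμ n).2)) hdiv
    (km_summable_mul_residual_sq hN hμ hη hζ hf)
  exact hL

theorem km_tendsto_succ_sub (hμ : ∀ n, μ n ∈ Set.Icc (0 : ℝ) 1)
    (hη : Summable fun n => μ n * ‖η n‖)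
    (hζ : ∀ n, ζ (n + 1) = ζ n + μ n • (N (ζ n) - ζ n + η n))
    (hres : Tendsto (fun n => ‖ζ n - N (ζ n)‖) atTop (𝓝 0)) :
    Tendsto (fun n => ζ (n + 1) - ζ n) atTop (𝓝 0) := by
  refine squeeze_zero_norm (fun n => ?_) (by simpa using hres.add hη.tendsto_atTop_zero)
  rw [hζ, add_sub_cancel_left, norm_smul, Real.norm_of_nonneg (hμ n).1, ← norm_neg (ζ n - _),
    neg_sub]
  calc μ n * ‖N (ζ n) - ζ n + η n‖ ≤ μ n * (‖N (ζ n) - ζ n‖ + ‖η n‖) :=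
        mul_le_mul_of_nonneg_left (norm_add_le _ _) (hμ n).1
    _ ≤ ‖N (ζ n) - ζ n‖ + μ n * ‖η n‖ := by
        nlinarith [(hμ n).2, norm_nonneg (N (ζ n) - ζ n)]

end KrasnoselskiiMann

section WeakConvergence

variable {E : Type*} [NormedAddCommGroup E] [InnerProductSpace ℝ E]

def WeakTendsto (ζ : ℕ → E) (l : Filter ℕ) (w : E) : Prop :=
  ∀ y : E, Tendsto (fun n => ⟪ζ n, y⟫) l (𝓝 ⟪w, y⟫)

/-- Banach–Alaoglu, transported to `E` by the Riesz representation. -/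
theorem exists_weakTendsto_of_norm_le [CompleteSpace E] {ζ : ℕ → E} {M : ℝ}
    (hM : ∀ n, ‖ζ n‖ ≤ M) (U : Ultrafilter ℕ) : ∃ w, WeakTendsto ζ U w := by
  let φ : ℕ → WeakDual ℝ E := fun n => StrongDual.toWeakDual (InnerProductSpace.toDual ℝ E (ζ n))
  have hK := WeakDual.isCompact_closedBall (𝕜 := ℝ) (E := E) 0 M
  obtain ⟨φ₀, -, hφ₀⟩ := hK.ultrafilter_le_nhds (U.map φ) (by
    rw [Ultrafilter.coe_map, le_principal_iff]
    exact Filter.mem_map.2 (Filter.univ_mem' fun n => by simpa [φ] using hM n))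
  refine ⟨(InnerProductSpace.toDual ℝ E).symm (WeakDual.toStrongDual φ₀), fun y => ?_⟩
  have := ((WeakDual.eval_continuous y).tendsto φ₀).comp (Ultrafilter.coe_map φ U ▸ hφ₀)
  simpa [φ, Function.comp_def] using this

/-- Browder's demiclosedness principle. -/
theorem fixedPoint_of_weakTendsto {N : E → E} (hN : LipschitzWith 1 N) {ζ : ℕ → E}
    {l : Filter ℕ} [l.NeBot] {w : E} (hw : WeakTendsto ζ l w) {C : ℝ} (hC : ∀ n, ‖ζ n - w‖ ≤ C)
    (hres : Tendsto (fun n => ‖ζ n - N (ζ n)‖) l (𝓝 0)) : N w = w := by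
  have hbound : ∀ n, ‖w - N w‖ ^ 2 ≤ ‖ζ n - N (ζ n)‖ ^ 2 + 2 * C * ‖ζ n - N (ζ n)‖
      - 2 * ⟪ζ n - w, w - N w⟫ := fun n => by
    have hexp : ‖ζ n - N w‖ ^ 2 = ‖ζ n - w‖ ^ 2 + 2 * ⟪ζ n - w, w - N w⟫ + ‖w - N w‖ ^ 2 := by
      rw [← norm_add_sq_real, sub_add_sub_cancel]
    have htri : ‖ζ n - N w‖ ≤ ‖ζ n - N (ζ n)‖ + ‖ζ n - w‖ := by
      rw [← sub_add_sub_cancel (ζ n) (N (ζ n)) (N w)]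
      exact (norm_add_le _ _).trans (add_le_add le_rfl (by simpa using hN.norm_sub_le (ζ n) w))
    nlinarith [pow_le_pow_left₀ (norm_nonneg _) htri 2, hC n, norm_nonneg (ζ n - N (ζ n))]
  have hinner : Tendsto (fun n => ⟪ζ n - w, w - N w⟫) l (𝓝 0) := by
    simpa [inner_sub_left] using (hw (w - N w)).sub_const ⟪w, w - N w⟫
  have hlim : Tendsto (fun n => ‖ζ n - N (ζ n)‖ ^ 2 + 2 * C * ‖ζ n - N (ζ n)‖
      - 2 * ⟪ζ n - w, w - N w⟫) l (𝓝 0) := by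
    simpa using ((hres.pow 2).add (hres.const_mul (2 * C))).sub (hinner.const_mul 2)
  have h0 : ‖w - N w‖ ^ 2 ≤ 0 := ge_of_tendsto' hlim hbound
  rw [eq_comm, ← sub_eq_zero, ← norm_eq_zero]
  exact pow_eq_zero_iff two_ne_zero |>.mp (le_antisymm h0 (sq_nonneg _))

theorem eq_of_weakTendsto_of_tendsto_norm_sub {ζ : ℕ → E} {U U' : Filter ℕ} [U.NeBot] [U'.NeBot]
    (hU : U ≤ atTop) (hU' : U' ≤ atTop) {w w' : E} (hw : WeakTendsto ζ U w)
    (hw' : WeakTendsto ζ U' w') {l l' : ℝ} (hl : Tendsto (fun n => ‖ζ n - w‖) atTop (𝓝 l))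
    (hl' : Tendsto (fun n => ‖ζ n - w'‖) atTop (𝓝 l')) : w = w' := by
  have hid : ∀ n, ⟪ζ n, w - w'⟫
      = (‖ζ n - w'‖ ^ 2 - ‖ζ n - w‖ ^ 2 + ‖w‖ ^ 2 - ‖w'‖ ^ 2) / 2 := fun n => by
    rw [norm_sub_sq_real, norm_sub_sq_real, inner_sub_right]
    ring
  have hc : Tendsto (fun n => ⟪ζ n, w - w'⟫) atTop
      (𝓝 ((l' ^ 2 - l ^ 2 + ‖w‖ ^ 2 - ‖w'‖ ^ 2) / 2)) := by
    simp only [hid]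
    exact ((((hl'.pow 2).sub (hl.pow 2)).add_const _).sub_const _).div_const _
  have h1 := tendsto_nhds_unique (hw (w - w')) (hc.mono_left hU)
  have h2 := tendsto_nhds_unique (hw' (w - w')) (hc.mono_left hU')
  rw [← sub_eq_zero, ← inner_self_eq_zero (𝕜 := ℝ), inner_sub_left, h1, h2, sub_self]

/-- Opial's lemma, with cluster points taken along ultrafilters. -/
theorem exists_weakTendsto_of_forall_tendsto_norm_sub [CompleteSpace E] {ζ : ℕ → E} {F : Set E}
    (hF : F.Nonempty) (hconv : ∀ f ∈ F, ∃ l, Tendsto (fun n => ‖ζ n - f‖) atTop (𝓝 l))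
    (hcluster : ∀ U : Ultrafilter ℕ, (U : Filter ℕ) ≤ atTop → ∀ w, WeakTendsto ζ U w → w ∈ F) :
    ∃ w ∈ F, WeakTendsto ζ atTop w := by
  obtain ⟨f₀, hf₀⟩ := hF
  obtain ⟨l₀, hl₀⟩ := hconv f₀ hf₀
  obtain ⟨M, hM⟩ := hl₀.bddAbove_range
  have hbdd : ∀ n, ‖ζ n‖ ≤ M + ‖f₀‖ := fun n =>
    (norm_le_norm_sub_add (ζ n) f₀).trans (add_le_add (hM ⟨n, rfl⟩) le_rfl)
  have hU₀ : (Ultrafilter.of (atTop : Filter ℕ) : Filter ℕ) ≤ atTop := Ultrafilter.of_le _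
  obtain ⟨w, hw⟩ := exists_weakTendsto_of_norm_le hbdd (Ultrafilter.of atTop)
  have hwF := hcluster _ hU₀ w hw
  refine ⟨w, hwF, fun y => (tendsto_iff_ultrafilter _ _ _).2 fun U hU => ?_⟩
  obtain ⟨w', hw'⟩ := exists_weakTendsto_of_norm_le hbdd U
  obtain ⟨l, hl⟩ := hconv w hwF
  obtain ⟨l', hl'⟩ := hconv w' (hcluster U hU w' hw')
  obtain rfl := eq_of_weakTendsto_of_tendsto_norm_sub (U' := ↑U) hU₀ hU hw hw' hl hl'
  exact hw' y

theorem km_exists_weakTendsto [CompleteSpace E] {N : E → E} (hN : LipschitzWith 1 N)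
    {μ : ℕ → ℝ} (hμ : ∀ n, μ n ∈ Set.Icc (0 : ℝ) 1) {η ζ : ℕ → E}
    (hη : Summable fun n => μ n * ‖η n‖) (hdiv : ¬Summable fun n => μ n * (1 - μ n))
    (hζ : ∀ n, ζ (n + 1) = ζ n + μ n • (N (ζ n) - ζ n + η n)) {f : E} (hf : N f = f) :
    ∃ w, N w = w ∧ WeakTendsto ζ atTop w := by
  obtain ⟨l, hl⟩ := km_exists_tendsto_norm_sub_fixedPoint hN hμ hη hζ hf
  obtain ⟨M, hM⟩ := hl.bddAbove_range
  refine exists_weakTendsto_of_forall_tendsto_norm_sub ⟨f, hf⟩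
    (fun g hg => km_exists_tendsto_norm_sub_fixedPoint hN hμ hη hζ hg) fun U hU w hw => ?_
  refine fixedPoint_of_weakTendsto hN hw (C := M + ‖f - w‖) (fun n => ?_)
    ((km_tendsto_residual hN hμ hη hdiv hζ hf).mono_left hU)
  rw [← sub_add_sub_cancel (ζ n) f w]
  exact (norm_add_le _ _).trans (add_le_add (hM ⟨n, rfl⟩) le_rfl)

end WeakConvergence

section GeneralizedForwardBackward

variable {ι : Type*} {E : Type*} [NormedAddCommGroup E] [InnerProductSpace ℝ E]

def IsFirmlyNonexpansive (R : E → E) : Prop :=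
  ∀ t t', 0 ≤ ⟪R t - R t', (t - R t) - (t' - R t')⟫

theorem IsFirmlyNonexpansive.of_resolvent {A : E → Set E} (hA : IsMonotoneOp A) {R : E → E}
    {c : ℝ} (hc : 0 ≤ c) (hR : ∀ t, ∃ u ∈ A (R t), t - R t = c • u) : IsFirmlyNonexpansive R := by
  intro t t'
  obtain ⟨u, hu, htu⟩ := hR t
  obtain ⟨u', hu', htu'⟩ := hR t'
  rw [htu, htu', ← smul_sub, real_inner_smul_right]
  exact mul_nonneg hc (hA _ _ _ _ hu hu')

theorem IsFirmlyNonexpansive.lipschitzWith_one {R : E → E} (hR : IsFirmlyNonexpansive R) :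
    LipschitzWith 1 R := LipschitzWith.mk_one fun t t' => by
  have h := hR t t'
  rw [show t - R t - (t' - R t') = (t - t') - (R t - R t') by abel, inner_sub_right,
    real_inner_self_eq_norm_sq] at h
  rw [dist_eq_norm, dist_eq_norm]
  nlinarith [real_inner_le_norm (R t - R t') (t - t'), norm_nonneg (R t - R t'),
    norm_nonneg (t - t')]

theorem norm_map_sub_smul_sub_map_add_le {R : E → E} (hR : LipschitzWith 1 R) {γ : ℝ}
    (hγ : 0 ≤ γ) (t a b : E) : ‖R (t - γ • a) - R t + b‖ ≤ max γ 1 * (‖a‖ + ‖b‖) := by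
  have h := hR.norm_sub_le (t - γ • a) t
  rw [sub_sub_cancel_left, norm_neg, norm_smul, Real.norm_of_nonneg hγ, NNReal.coe_one,
    one_mul] at h
  calc ‖R (t - γ • a) - R t + b‖ ≤ γ * ‖a‖ + ‖b‖ := (norm_add_le _ _).trans (by linarith)
    _ ≤ max γ 1 * ‖a‖ + max γ 1 * ‖b‖ := by
      gcongr
      · exact le_max_left _ _
      · exact le_mul_of_one_le_left (norm_nonneg _) (le_max_right _ _)
    _ = max γ 1 * (‖a‖ + ‖b‖) := by ring

/-- Rescaling by `√ω` identifies `ι → E`, normed by `(∑ ω i ‖z i‖²)^½`, with `ℓ²(ι; E)`. -/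
noncomputable def weightedEquiv (ω : ι → ℝ) (hω : ∀ i, 0 < ω i) :
    (ι → E) ≃ₗ[ℝ] PiLp 2 (fun _ : ι => E) :=
  (LinearEquiv.piCongrRight fun i =>
    LinearEquiv.smulOfNeZero ℝ E _ (Real.sqrt_pos.2 (hω i)).ne').trans
    (WithLp.linearEquiv 2 ℝ (ι → E)).symm

theorem weightedEquiv_apply {ω : ι → ℝ} (hω : ∀ i, 0 < ω i) (z : ι → E) (i : ι) :
    (weightedEquiv ω hω z).ofLp i = √(ω i) • z i := rfl

variable [Fintype ι]

def weightedMean (ω : ι → ℝ) : (ι → E) →ₗ[ℝ] E := ∑ i, ω i • LinearMap.proj i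

theorem weightedMean_apply (ω : ι → ℝ) (z : ι → E) : weightedMean ω z = ∑ i, ω i • z i := by
  simp [weightedMean]

/-- The operator `T` of generalized forward–backward splitting: up to the errors, the algorithm
of the theorem is `z ↦ z + λ (T z - z)`. -/
def gfbOperator (ω : ι → ℝ) (J : ι → E → E) (B : E → E) (γ : ℝ) (z : ι → E) : ι → E :=
  fun i => z i + (J i ((2 : ℝ) • weightedMean ω z - z i - γ • B (weightedMean ω z))
    - weightedMean ω z)

section Zeros

variable {ω : ι → ℝ} {A : ι → E → Set E} {J : ι → E → E} {B : E → E} {γ : ℝ}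

theorem exists_fixedPoint_gfbOperator (hω : ∀ i, ω i ≠ 0) (hω1 : ∑ i, ω i = 1)
    (hJ : ∀ i x p, J i x = p ↔ ∃ u ∈ A i p, x - p = (γ / ω i) • u)
    (hsol : ∃ x, ∃ u : ι → E, (∀ i, u i ∈ A i x) ∧ ∑ i, u i + B x = 0) :
    ∃ z, gfbOperator ω J B γ z = z := by
  obtain ⟨x, u, hu, hsum⟩ := hsol
  refine ⟨fun i => x - γ • B x - (γ / ω i) • u i, ?_⟩
  have hmean : weightedMean ω (fun i => x - γ • B x - (γ / ω i) • u i) = x := by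
    simp only [weightedMean_apply, smul_sub, smul_smul, mul_div_cancel₀ _ (hω _),
      Finset.sum_sub_distrib, ← Finset.sum_smul, ← Finset.sum_mul, hω1, one_mul, one_smul,
      ← Finset.smul_sum, eq_neg_of_add_eq_zero_left hsum]
    module
  funext i
  simp only [gfbOperator, hmean]
  rw [(hJ i _ x).2 ⟨u i, hu i, by module⟩, sub_self, add_zero]

theorem exists_zero_of_fixedPoint_gfbOperator (hω : ∀ i, ω i ≠ 0) (hω1 : ∑ i, ω i = 1)
    (hJ : ∀ i x p, J i x = p ↔ ∃ u ∈ A i p, x - p = (γ / ω i) • u) (hγ : γ ≠ 0) {z : ι → E}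
    (hz : gfbOperator ω J B γ z = z) :
    ∃ u : ι → E, (∀ i, u i ∈ A i (weightedMean ω z)) ∧ ∑ i, u i + B (weightedMean ω z) = 0 := by
  set x := weightedMean ω z
  have hJx : ∀ i, J i ((2 : ℝ) • x - z i - γ • B x) = x := fun i => by
    have := congrFun hz i
    simp only [gfbOperator] at this
    exact sub_eq_zero.1 (add_eq_left.1 this)
  choose u hu hxu using fun i => (hJ i _ _).1 (hJx i)
  refine ⟨u, hu, smul_right_injective E hγ ?_⟩
  have hγu : ∀ i, γ • u i = ω i • (x - z i - γ • B x) := fun i => by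
    rw [show x - z i - γ • B x = (2 : ℝ) • x - z i - γ • B x - x by module, hxu i, smul_smul,
      mul_div_cancel₀ _ (hω i)]
  simp only [smul_add, Finset.smul_sum, hγu, smul_zero, smul_sub, Finset.sum_sub_distrib,
    ← Finset.sum_smul, hω1, one_smul, ← weightedMean_apply, x]
  abel

end Zeros

variable {ω : ι → ℝ} (hω : ∀ i, 0 < ω i)

theorem inner_weightedEquiv (z z' : ι → E) :
    ⟪weightedEquiv ω hω z, weightedEquiv ω hω z'⟫ = ∑ i, ω i * ⟪z i, z' i⟫ := by
  simp only [PiLp.inner_apply, weightedEquiv_apply, real_inner_smul_left, real_inner_smul_right,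
    ← mul_assoc, Real.mul_self_sqrt (hω _).le]

theorem norm_weightedEquiv_sq (z : ι → E) :
    ‖weightedEquiv ω hω z‖ ^ 2 = ∑ i, ω i * ‖z i‖ ^ 2 := by
  simp only [← real_inner_self_eq_norm_sq, inner_weightedEquiv]

theorem inner_weightedMean (z : ι → E) (y : E) :
    ⟪weightedMean ω z, y⟫ = ⟪weightedEquiv ω hω z, weightedEquiv ω hω fun _ => y⟫ := by
  simp only [inner_weightedEquiv, weightedMean_apply, sum_inner, real_inner_smul_left]

theorem norm_weightedMean_le (hω1 : ∑ i, ω i = 1) (z : ι → E) :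
    ‖weightedMean ω z‖ ≤ ‖weightedEquiv ω hω z‖ := by
  refine (pow_le_pow_iff_left₀ (norm_nonneg _) (norm_nonneg _) two_ne_zero).mp ?_
  rw [norm_weightedEquiv_sq, weightedMean_apply]
  exact ((convexOn_univ_norm.pow (fun _ _ => norm_nonneg _) 2).map_sum_le
    (fun i _ => (hω i).le) hω1 (fun _ _ => Set.mem_univ _))

theorem norm_weightedEquiv_le (z : ι → E) :
    ‖weightedEquiv ω hω z‖ ≤ ∑ i, √(ω i) * ‖z i‖ := by
  refine (pow_le_pow_iff_left₀ (norm_nonneg _) (Finset.sum_nonneg fun i _ => by positivity)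
    two_ne_zero).mp ?_
  rw [norm_weightedEquiv_sq]
  refine le_of_eq_of_le (Finset.sum_congr rfl fun i _ => ?_)
    (Finset.sum_sq_le_sq_sum_of_nonneg fun i _ => by positivity)
  rw [mul_pow, Real.sq_sqrt (hω i).le]

theorem summable_mul_norm_weightedEquiv {lam : ℕ → ℝ} (hlam : ∀ n, 0 ≤ lam n) {err : ℕ → ι → E}
    (herr : ∀ i, Summable fun n => lam n * ‖err n i‖) :
    Summable fun n => lam n * ‖weightedEquiv ω hω (err n)‖ := by
  refine Summable.of_nonneg_of_le (fun n => mul_nonneg (hlam n) (norm_nonneg _)) (fun n => ?_)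
    (summable_sum (s := Finset.univ) fun i _ => (herr i).mul_left √(ω i))
  calc lam n * ‖weightedEquiv ω hω (err n)‖ ≤ lam n * ∑ i, √(ω i) * ‖err n i‖ :=
        mul_le_mul_of_nonneg_left (norm_weightedEquiv_le hω _) (hlam n)
    _ = ∑ i, √(ω i) * (lam n * ‖err n i‖) := by
        rw [Finset.mul_sum]
        exact Finset.sum_congr rfl fun i _ => by ring

/-- The weighted sum over `i` of the firm nonexpansiveness inequalities of `J i`, plus the
cocoercivity of `B`. -/
theorem gfbOperator_fundamental_ineq (hω1 : ∑ i, ω i = 1) {J : ι → E → E}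
    (hJ : ∀ i, IsFirmlyNonexpansive (J i)) {β : ℝ} {B : E → E}
    (hB : ∀ x y, β * ‖B x - B y‖ ^ 2 ≤ ⟪x - y, B x - B y⟫) {γ : ℝ} (hγ : 0 ≤ γ) (z z' : ι → E) :
    let d := gfbOperator ω J B γ z - z - (gfbOperator ω J B γ z' - z')
    γ * β * ‖B (weightedMean ω z) - B (weightedMean ω z')‖ ^ 2
      + ⟪weightedEquiv ω hω d, weightedEquiv ω hω (z - z')⟫ + ‖weightedEquiv ω hω d‖ ^ 2
      + γ * ⟪weightedMean ω d, B (weightedMean ω z) - B (weightedMean ω z')⟫ ≤ 0 := by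
  intro d
  set x := weightedMean ω z
  set x' := weightedMean ω z'
  set g := B x - B x'
  have hmono : ∀ i, 0 ≤ ω i * ⟪(x - x') + d i, (x - x') - (z - z') i - γ • g - d i⟫ := fun i => by
    set t := (2 : ℝ) • x - z i - γ • B x
    set t' := (2 : ℝ) • x' - z' i - γ • B x'
    have hd : d i = J i t - x - (J i t' - x') := by
      simp only [d, gfbOperator, Pi.sub_apply, x, x', t, t']; abel
    have e1 : x - x' + d i = J i t - J i t' := by rw [hd]; abel
    have e2 : x - x' - (z - z') i - γ • g - d i = (t - J i t) - (t' - J i t') := by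
      simp only [hd, Pi.sub_apply, g, t, t']; module
    rw [e1, e2]
    exact mul_nonneg (hω i).le (hJ i t t')
  have hterm : ∀ i, ω i * ⟪(x - x') + d i, (x - x') - (z - z') i - γ • g - d i⟫
      = ω i * ⟪x - x', x - x'⟫ - ⟪x - x', ω i • (z - z') i⟫ - ω i * (γ * ⟪x - x', g⟫)
        - ω i * ⟪d i, (z - z') i⟫ - γ * ⟪ω i • d i, g⟫ - ω i * ‖d i‖ ^ 2 := fun i => by
    generalize x - x' = δ
    simp only [inner_add_left, inner_sub_right, real_inner_smul_left, real_inner_smul_right,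
      real_inner_comm δ (d i), real_inner_self_eq_norm_sq]
    ring
  have hsum := Finset.sum_nonneg fun i (_ : i ∈ Finset.univ) => hmono i
  simp only [hterm, Finset.sum_sub_distrib, ← Finset.sum_mul, ← Finset.mul_sum, ← inner_sum,
    ← sum_inner, hω1, ← weightedMean_apply, map_sub] at hsum
  rw [inner_weightedEquiv, norm_weightedEquiv_sq]
  nlinarith [mul_le_mul_of_nonneg_left (hB x x') hγ]

/-- `gfbOperator` is `α`-averaged for the weighted norm: `Id + α⁻¹ (T - Id)` is nonexpansive. -/
theorem gfbOperator_averaged (hω1 : ∑ i, ω i = 1) {J : ι → E → E}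
    (hJ : ∀ i, IsFirmlyNonexpansive (J i)) {β : ℝ} (hβ : 0 < β) {B : E → E}
    (hB : ∀ x y, β * ‖B x - B y‖ ^ 2 ≤ ⟪x - y, B x - B y⟫) {γ : ℝ} (hγ : 0 < γ) {α : ℝ}
    (hα : 0 < α) (hαγ : γ ≤ 2 * β * (2 - α⁻¹)) (z z' : ι → E) :
    ‖weightedEquiv ω hω (z - z' + α⁻¹ •
      (gfbOperator ω J B γ z - z - (gfbOperator ω J B γ z' - z')))‖
      ≤ ‖weightedEquiv ω hω (z - z')‖ := by
  have hF := gfbOperator_fundamental_ineq hω hω1 hJ hB hγ.le z z'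
  set d := gfbOperator ω J B γ z - z - (gfbOperator ω J B γ z' - z')
  set g := B (weightedMean ω z) - B (weightedMean ω z')
  set e := weightedEquiv (E := E) ω hω
  have hS : ‖weightedMean ω d‖ ≤ ‖e d‖ := norm_weightedMean_le hω hω1 d
  have hSg := neg_le_of_abs_le (abs_real_inner_le_norm (weightedMean ω d) g)
  have hκ : 0 < 2 - α⁻¹ := pos_of_mul_pos_right (hγ.trans_le hαγ) (by positivity)
  -- `κ (2γβ G² - 2γ S G + κ S²) = (κ S - γ G)² + γ G² (2βκ - γ)` with `κ = 2 - α⁻¹`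
  have hsq : 0 ≤ (2 - α⁻¹) * (2 * γ * β * ‖g‖ ^ 2 - 2 * γ * ‖weightedMean ω d‖ * ‖g‖
      + (2 - α⁻¹) * ‖weightedMean ω d‖ ^ 2) := by
    nlinarith [sq_nonneg ((2 - α⁻¹) * ‖weightedMean ω d‖ - γ * ‖g‖),
      mul_nonneg (mul_nonneg hγ.le (sq_nonneg ‖g‖)) (sub_nonneg.2 hαγ)]
  have hkey : 2 * ⟪e d, e (z - z')⟫ + α⁻¹ * ‖e d‖ ^ 2 ≤ 0 := by
    have := (mul_nonneg_iff_of_pos_left hκ).1 hsq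
    nlinarith [mul_le_mul_of_nonneg_left (pow_le_pow_left₀ (norm_nonneg _) hS 2) hκ.le,
      mul_le_mul_of_nonneg_left hSg hγ.le]
  refine (pow_le_pow_iff_left₀ (norm_nonneg _) (norm_nonneg _) two_ne_zero).mp ?_
  rw [map_add, map_smul, norm_add_sq_real, real_inner_smul_right, norm_smul, mul_pow,
    Real.norm_of_nonneg (inv_nonneg.2 hα.le), real_inner_comm]
  nlinarith [mul_le_mul_of_nonneg_left hkey (inv_nonneg.2 hα.le)]

/-- The nonexpansive `R` with `T = (1 - α) Id + α R`, read in `ℓ²(ι; E)`. -/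
noncomputable def gfbNonexpansive (J : ι → E → E) (B : E → E) (γ α : ℝ)
    (v : PiLp 2 (fun _ : ι => E)) : PiLp 2 (fun _ : ι => E) :=
  v + α⁻¹ • weightedEquiv ω hω
    (gfbOperator ω J B γ ((weightedEquiv ω hω).symm v) - (weightedEquiv ω hω).symm v)

theorem gfbNonexpansive_weightedEquiv (J : ι → E → E) (B : E → E) (γ α : ℝ) (z : ι → E) :
    gfbNonexpansive hω J B γ α (weightedEquiv ω hω z)
      = weightedEquiv ω hω z + α⁻¹ • weightedEquiv ω hω (gfbOperator ω J B γ z - z) := by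
  simp [gfbNonexpansive]

theorem lipschitzWith_one_gfbNonexpansive (hω1 : ∑ i, ω i = 1) {J : ι → E → E}
    (hJ : ∀ i, IsFirmlyNonexpansive (J i)) {β : ℝ} (hβ : 0 < β) {B : E → E}
    (hB : ∀ x y, β * ‖B x - B y‖ ^ 2 ≤ ⟪x - y, B x - B y⟫) {γ : ℝ} (hγ : 0 < γ) {α : ℝ}
    (hα : 0 < α) (hαγ : γ ≤ 2 * β * (2 - α⁻¹)) :
    LipschitzWith 1 (gfbNonexpansive hω J B γ α) := LipschitzWith.mk_one fun v v' => by
  obtain ⟨z, rfl⟩ := (weightedEquiv ω hω).surjective v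
  obtain ⟨z', rfl⟩ := (weightedEquiv ω hω).surjective v'
  have := gfbOperator_averaged hω hω1 hJ hβ hB hγ hα hαγ z z'
  simp only [map_add, map_sub, map_smul] at this
  simpa only [dist_eq_norm, gfbNonexpansive_weightedEquiv, map_sub, add_sub_add_comm,
    ← smul_sub] using this

theorem tendsto_comp_weightedMean_of_tendsto_residual (hω1 : ∑ i, ω i = 1) {J : ι → E → E}
    (hJ : ∀ i, IsFirmlyNonexpansive (J i)) {β : ℝ} (hβ : 0 < β) {B : E → E}
    (hB : ∀ x y, β * ‖B x - B y‖ ^ 2 ≤ ⟪x - y, B x - B y⟫) {γ : ℝ} (hγ : 0 < γ)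
    {z : ℕ → ι → E} {zbar : ι → E} (hzbar : gfbOperator ω J B γ zbar = zbar) {M : ℝ}
    (hM : ∀ n, ‖weightedEquiv ω hω (z n - zbar)‖ ≤ M)
    (hres : Tendsto (fun n => ‖weightedEquiv ω hω (gfbOperator ω J B γ (z n) - z n)‖) atTop (𝓝 0)) :
    Tendsto (fun n => B (weightedMean ω (z n))) atTop (𝓝 (B (weightedMean ω zbar))) := by
  rw [tendsto_iff_norm_sub_tendsto_zero]
  refine tendsto_zero_of_mul_sq_le_add_mul (mul_pos hγ hβ) (fun n => norm_nonneg _)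
    (a := fun n => ‖weightedEquiv ω hω (gfbOperator ω J B γ (z n) - z n)‖ * M)
    (b := fun n => γ * ‖weightedEquiv ω hω (gfbOperator ω J B γ (z n) - z n)‖)
    (fun n => ?_) (by simpa using hres.mul_const M) (by simpa using hres.const_mul γ)
  have hF := gfbOperator_fundamental_ineq hω hω1 hJ hB hγ.le (z n) zbar
  simp only [hzbar, sub_self, sub_zero] at hF
  set e := weightedEquiv (E := E) ω hω
  set d := gfbOperator ω J B γ (z n) - z n
  set g := B (weightedMean ω (z n)) - B (weightedMean ω zbar)
  have h1 : -⟪e d, e (z n - zbar)⟫ ≤ ‖e d‖ * M :=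
    (neg_le_abs _).trans ((abs_real_inner_le_norm _ _).trans
      (mul_le_mul_of_nonneg_left (hM n) (norm_nonneg _)))
  have h2 : -⟪weightedMean ω d, g⟫ ≤ ‖e d‖ * ‖g‖ :=
    (neg_le_abs _).trans ((abs_real_inner_le_norm _ _).trans
      (mul_le_mul_of_nonneg_right (norm_weightedMean_le hω hω1 d) (norm_nonneg _)))
  nlinarith [mul_le_mul_of_nonneg_left h2 hγ.le, sq_nonneg ‖e d‖]

end GeneralizedForwardBackward

section Convergence

variable {ι : Type*} [Fintype ι] {E : Type*} [NormedAddCommGroup E] [InnerProductSpace ℝ E]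
  [CompleteSpace E]

theorem gfbIteration_weakTendsto_fixedPoint {ω : ι → ℝ} (hω : ∀ i, 0 < ω i)
    (hω1 : ∑ i, ω i = 1) {J : ι → E → E} (hJ : ∀ i, IsFirmlyNonexpansive (J i)) {β : ℝ}
    (hβ : 0 < β) {B : E → E} (hB : ∀ x y, β * ‖B x - B y‖ ^ 2 ≤ ⟪x - y, B x - B y⟫) {γ : ℝ}
    (hγ : 0 < γ) {α : ℝ} (hα : 0 < α) (hαγ : γ ≤ 2 * β * (2 - α⁻¹)) {z₀ : ι → E}
    (hz₀ : gfbOperator ω J B γ z₀ = z₀) {lam : ℕ → ℝ} (hlam : ∀ n, lam n ∈ Set.Icc 0 α⁻¹)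
    (hdiv : ¬Summable fun n => lam n * (1 - α * lam n)) {err : ℕ → ι → E}
    (herr : ∀ i, Summable fun n => lam n * ‖err n i‖) {z : ℕ → ι → E}
    (hz : ∀ n, z (n + 1) = z n + lam n • (gfbOperator ω J B γ (z n) - z n + err n)) :
    ∃ zbar, gfbOperator ω J B γ zbar = zbar ∧
      WeakTendsto (fun n => weightedEquiv ω hω (z n)) atTop (weightedEquiv ω hω zbar) ∧
      (∃ M, ∀ n, ‖weightedEquiv ω hω (z n - zbar)‖ ≤ M) ∧
      Tendsto (fun n => ‖weightedEquiv ω hω (gfbOperator ω J B γ (z n) - z n)‖) atTop (𝓝 0) ∧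
      Tendsto (fun n => weightedEquiv ω hω (z (n + 1) - z n)) atTop (𝓝 0) := by
  set N := gfbNonexpansive hω J B γ α
  have hN : LipschitzWith 1 N := lipschitzWith_one_gfbNonexpansive hω hω1 hJ hβ hB hγ hα hαγ
  have hfix : ∀ z, N (weightedEquiv ω hω z) = weightedEquiv ω hω z ↔ gfbOperator ω J B γ z = z :=
    fun z => by simp [N, gfbNonexpansive_weightedEquiv, hα.ne', sub_eq_zero]
  have hμ : ∀ n, α * lam n ∈ Set.Icc (0 : ℝ) 1 := fun n => ⟨mul_nonneg hα.le (hlam n).1,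
    by simpa [hα.ne'] using mul_le_mul_of_nonneg_left (hlam n).2 hα.le⟩
  set ζ := fun n => weightedEquiv ω hω (z n)
  set η := fun n => α⁻¹ • weightedEquiv ω hω (err n)
  have hζ : ∀ n, ζ (n + 1) = ζ n + (α * lam n) • (N (ζ n) - ζ n + η n) := fun n => by
    simp only [ζ, η, hz n, N, gfbNonexpansive_weightedEquiv, add_sub_cancel_left, map_add,
      map_smul]
    match_scalars <;> field_simp
  have hη : Summable fun n => α * lam n * ‖η n‖ := by
    refine (summable_mul_norm_weightedEquiv hω (fun n => (hlam n).1) herr).congr fun n => ?_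
    rw [norm_smul, Real.norm_of_nonneg (inv_nonneg.2 hα.le)]
    field_simp
  have hdiv' : ¬Summable fun n => α * lam n * (1 - α * lam n) := by
    simpa only [mul_assoc, summable_mul_left_iff hα.ne'] using hdiv
  have hf := (hfix z₀).2 hz₀
  obtain ⟨w, hw, hweak⟩ := km_exists_weakTendsto hN hμ hη hdiv' hζ hf
  have hres := km_tendsto_residual hN hμ hη hdiv' hζ hf
  obtain ⟨l, hl⟩ := km_exists_tendsto_norm_sub_fixedPoint hN hμ hη hζ hw
  obtain ⟨M, hM⟩ := hl.bddAbove_range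
  refine ⟨(weightedEquiv ω hω).symm w, (hfix _).1 (by simpa using hw), by simpa using hweak,
    ⟨M, fun n => by simpa using hM ⟨n, rfl⟩⟩, ?_, by simpa using km_tendsto_succ_sub hμ hη hζ hres⟩
  have hFres : ∀ n, ‖weightedEquiv ω hω (gfbOperator ω J B γ (z n) - z n)‖
      = α * ‖ζ n - N (ζ n)‖ := fun n => by
    simp [ζ, N, gfbNonexpansive_weightedEquiv, norm_smul, abs_of_pos hα, hα.ne']
  simp only [hFres]
  simpa using hres.const_mul α

theorem gfb_convergence {ω : ι → ℝ} (hω : ∀ i, 0 < ω i) (hω1 : ∑ i, ω i = 1)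
    {A : ι → E → Set E} (hA : ∀ i, IsMonotoneOp (A i)) {γ : ℝ} (hγ : 0 < γ) {J : ι → E → E}
    (hJ : ∀ i x p, J i x = p ↔ ∃ u ∈ A i p, x - p = (γ / ω i) • u) {β : ℝ} (hβ : 0 < β)
    {B : E → E} (hB : ∀ x y, β * ‖B x - B y‖ ^ 2 ≤ ⟪x - y, B x - B y⟫) {α : ℝ} (hα : 0 < α)
    (hαγ : γ ≤ 2 * β * (2 - α⁻¹))
    (hsol : ∃ x, ∃ u : ι → E, (∀ i, u i ∈ A i x) ∧ ∑ i, u i + B x = 0) {lam : ℕ → ℝ}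
    (hlam : ∀ n, lam n ∈ Set.Icc 0 α⁻¹) (hdiv : ¬Summable fun n => lam n * (1 - α * lam n))
    {a : ℕ → E} {b : ℕ → ι → E} (herr : ∀ i, Summable fun n => lam n * (‖a n‖ + ‖b n i‖))
    {z : ℕ → ι → E} (hz : ∀ n i, z (n + 1) i = z n i + lam n • (J i ((2 : ℝ) • weightedMean ω (z n)
      - z n i - γ • (B (weightedMean ω (z n)) + a n)) + b n i - weightedMean ω (z n))) :
    ∃ xbar, (∃ u : ι → E, (∀ i, u i ∈ A i xbar) ∧ ∑ i, u i + B xbar = 0) ∧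
      WeakLim (fun n => weightedMean ω (z n)) xbar ∧
      Tendsto (fun n => B (weightedMean ω (z n))) atTop (𝓝 (B xbar)) ∧
      Tendsto (fun n => weightedMean ω (z (n + 1)) - weightedMean ω (z n)) atTop (𝓝 0) := by
  have hJfn : ∀ i, IsFirmlyNonexpansive (J i) := fun i =>
    .of_resolvent (hA i) (div_nonneg hγ.le (hω i).le) fun t => (hJ i t _).1 rfl
  set t : ℕ → ι → E := fun n i =>
    (2 : ℝ) • weightedMean ω (z n) - z n i - γ • B (weightedMean ω (z n))
  set err : ℕ → ι → E := fun n i => J i (t n i - γ • a n) - J i (t n i) + b n i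
  have herr' : ∀ i, Summable fun n => lam n * ‖err n i‖ := fun i =>
    ((herr i).mul_left (max γ 1)).of_nonneg_of_le (fun n => mul_nonneg (hlam n).1 (norm_nonneg _))
      fun n => by
        rw [mul_left_comm]
        exact mul_le_mul_of_nonneg_left
          (norm_map_sub_smul_sub_map_add_le (hJfn i).lipschitzWith_one hγ.le (t n i) (a n) (b n i))
          (hlam n).1
  have hz' : ∀ n, z (n + 1) = z n + lam n • (gfbOperator ω J B γ (z n) - z n + err n) :=
    fun n => funext fun i => by
      rw [hz n i, show (2 : ℝ) • weightedMean ω (z n) - z n i - γ • (B (weightedMean ω (z n)) + a n)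
        = t n i - γ • a n by simp only [t]; module]
      simp only [gfbOperator, err, t, Pi.add_apply, Pi.sub_apply, Pi.smul_apply]
      module
  obtain ⟨z₀, hz₀⟩ := exists_fixedPoint_gfbOperator (fun i => (hω i).ne') hω1 hJ hsol
  obtain ⟨zbar, hzbar, hweak, ⟨M, hM⟩, hres, hstep⟩ :=
    gfbIteration_weakTendsto_fixedPoint hω hω1 hJfn hβ hB hγ hα hαγ hz₀ hlam hdiv herr' hz'
  refine ⟨weightedMean ω zbar,
    exists_zero_of_fixedPoint_gfbOperator (fun i => (hω i).ne') hω1 hJ hγ.ne' hzbar, fun y => ?_,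
    tendsto_comp_weightedMean_of_tendsto_residual hω hω1 hJfn hβ hB hγ hzbar hM hres, ?_⟩
  · simpa only [inner_weightedMean hω] using hweak (weightedEquiv ω hω fun _ => y)
  · refine squeeze_zero_norm (fun n => ?_) (tendsto_norm_zero.comp hstep)
    rw [← map_sub]
    exact norm_weightedMean_le hω hω1 _

end Convergence

theorem le_two_mul_mul_two_sub_inv_max {β γ : ℝ} (hγ : γ ∈ Set.Ioo 0 (2 * β)) :
    γ ≤ 2 * β * (2 - (max (2 / 3) (2 * γ / (γ + 2 * β)))⁻¹) := by
  obtain ⟨hγ0, hγβ⟩ := hγ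
  rcases le_total γ β with h | h
  · have := inv_anti₀ (by norm_num) (le_max_left (2 / 3 : ℝ) (2 * γ / (γ + 2 * β)))
    norm_num at this
    nlinarith
  · have hβ : 0 < β := by linarith
    have := inv_anti₀ (by positivity) (le_max_right (2 / 3 : ℝ) (2 * γ / (γ + 2 * β)))
    rw [inv_div] at this
    have key : γ ≤ 2 * β * (2 - (γ + 2 * β) / (2 * γ)) := by
      rw [← sub_nonneg, show 2 * β * (2 - (γ + 2 * β) / (2 * γ)) - γ
        = (γ - β) * (2 * β - γ) / γ by field_simp; ring]
      exact div_nonneg (mul_nonneg (sub_nonneg.2 h) (sub_nonneg.2 hγβ.le)) hγ0.le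
    nlinarith

theorem statement16_general
    (m : ℕ)
    (A : ℕ → H → Set H) (hA : ∀ i ∈ Finset.Icc 1 m, IsMaxMonotoneOp (A i))
    (β : ℝ) (hβ : 0 < β)
    (B : H → H) (hB : ∀ x y : H, β * ‖B x - B y‖ ^ 2 ≤ ⟪x - y, B x - B y⟫)
    (hsol : ∃ x : H, ∃ u : ℕ → H, (∀ i ∈ Finset.Icc 1 m, u i ∈ A i x) ∧
      (∑ i ∈ Finset.Icc 1 m, u i) + B x = 0)
    (ω : ℕ → ℝ) (hω : ∀ i ∈ Finset.Icc 1 m, ω i ∈ Set.Ioo (0 : ℝ) 1)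
    (hωsum : (∑ i ∈ Finset.Icc 1 m, ω i) = 1)
    (γ : ℝ) (hγ : γ ∈ Set.Ioo (0 : ℝ) (2 * β))
    (α : ℝ) (hα : α = max (2 / 3) (2 * γ / (γ + 2 * β)))
    (lam : ℕ → ℝ) (hlam : ∀ n, lam n ∈ Set.Ioo (0 : ℝ) (1 / α))
    (a : ℕ → H) (b : ℕ → ℕ → H)
    (hdiv : ¬ Summable (fun n => lam n * (1 - α * lam n)))
    (herr : ∀ i ∈ Finset.Icc 1 m, Summable (fun n => lam n * (‖a n‖ + ‖b i n‖)))
    (J : ℕ → H → H)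
    (hJ : ∀ i ∈ Finset.Icc 1 m, ∀ x p : H, J i x = p ↔ ∃ u ∈ A i p, x - p = (γ / ω i) • u)
    (z s p : ℕ → ℕ → H) (x : ℕ → H)
    (hx : ∀ n, x n = ∑ i ∈ Finset.Icc 1 m, ω i • z i n)
    (hs : ∀ n, ∀ i ∈ Finset.Icc 1 m, s i n = (2 : ℝ) • x n - z i n - γ • (B (x n) + a n))
    (hp : ∀ n, ∀ i ∈ Finset.Icc 1 m, p i n = J i (s i n) + b i n)
    (hzr : ∀ n, ∀ i ∈ Finset.Icc 1 m, z i (n + 1) = z i n + lam n • (p i n - x n)) :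
    ∃ xbar : H,
      (∃ u : ℕ → H, (∀ i ∈ Finset.Icc 1 m, u i ∈ A i xbar) ∧
        (∑ i ∈ Finset.Icc 1 m, u i) + B xbar = 0) ∧
      WeakLim x xbar ∧
      Tendsto (fun n => B (x n)) atTop (nhds (B xbar)) ∧
      Tendsto (fun n => x (n + 1) - x n) atTop (nhds 0) := by
  have hα0 : 0 < α := hα ▸ lt_max_of_lt_left (by norm_num)
  have hx' : ∀ n, x n = weightedMean (fun i : Finset.Icc 1 m => ω i) (fun i => z i n) := fun n => by
    rw [hx n, weightedMean_apply, Finset.sum_coe_sort (Finset.Icc 1 m) (fun i => ω i • z i n)]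
  obtain ⟨xbar, ⟨u, hu, hsum⟩, hweak, hBx, hstep⟩ := gfb_convergence (ι := Finset.Icc 1 m)
    (fun i => (hω i i.2).1) (by rwa [Finset.sum_coe_sort]) (A := fun i => A i)
    (fun i => (hA i i.2).1) hγ.1 (fun i => hJ i i.2) hβ hB hα0
    (hα ▸ le_two_mul_mul_two_sub_inv_max hγ)
    (by
      obtain ⟨x, u, hu, hs⟩ := hsol
      exact ⟨x, fun i => u i, fun i => hu i i.2, by rwa [Finset.sum_coe_sort]⟩)
    (fun n => ⟨(hlam n).1.le, by simpa using (hlam n).2.le⟩) hdiv (b := fun n i => b i n)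
    (fun i => herr i i.2) (z := fun n i => z i n)
    (fun n i => by rw [hzr n i i.2, hp n i i.2, hs n i i.2, ← hx'])
  simp only [← hx'] at hweak hBx hstep
  refine ⟨xbar, ⟨Function.extend Subtype.val u 0, fun i hi => ?_, ?_⟩, hweak, hBx, hstep⟩
  · exact (Subtype.val_injective.extend_apply u 0 ⟨i, hi⟩).symm ▸ hu ⟨i, hi⟩
  · rw [← Finset.sum_coe_sort]
    simpa [Subtype.val_injective.extend_apply] using hsum

theorem statement16
    (m : ℕ) (hm : 1 ≤ m)
    (A : ℕ → H → Set H) (hA : ∀ i ∈ Finset.Icc 1 m, IsMaxMonotoneOp (A i))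
    (β : ℝ) (hβ : 0 < β)
    (B : H → H) (hB : ∀ x y : H, β * ‖B x - B y‖ ^ 2 ≤ ⟪x - y, B x - B y⟫)
    (hsol : ∃ x : H, ∃ u : ℕ → H, (∀ i ∈ Finset.Icc 1 m, u i ∈ A i x) ∧
      (∑ i ∈ Finset.Icc 1 m, u i) + B x = 0)
    (ω : ℕ → ℝ) (hω : ∀ i ∈ Finset.Icc 1 m, ω i ∈ Set.Ioo (0 : ℝ) 1)
    (hωsum : (∑ i ∈ Finset.Icc 1 m, ω i) = 1)
    (γ : ℝ) (hγ : γ ∈ Set.Ioo (0 : ℝ) (2 * β))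
    (α : ℝ) (hα : α = max (2 / 3) (2 * γ / (γ + 2 * β)))
    (lam : ℕ → ℝ) (hlam : ∀ n, lam n ∈ Set.Ioo (0 : ℝ) (1 / α))
    (a : ℕ → H) (b : ℕ → ℕ → H)
    (hdiv : ¬ Summable (fun n => lam n * (1 - α * lam n)))
    (herr : ∀ i ∈ Finset.Icc 1 m, Summable (fun n => lam n * (‖a n‖ + ‖b i n‖)))
    (J : ℕ → H → H)
    (hJ : ∀ i ∈ Finset.Icc 1 m, ∀ x p : H, J i x = p ↔ ∃ u ∈ A i p, x - p = (γ / ω i) • u)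
    (z s p : ℕ → ℕ → H) (x : ℕ → H)
    (hx : ∀ n, x n = ∑ i ∈ Finset.Icc 1 m, ω i • z i n)
    (hs : ∀ n, ∀ i ∈ Finset.Icc 1 m, s i n = (2 : ℝ) • x n - z i n - γ • (B (x n) + a n))
    (hp : ∀ n, ∀ i ∈ Finset.Icc 1 m, p i n = J i (s i n) + b i n)
    (hzr : ∀ n, ∀ i ∈ Finset.Icc 1 m, z i (n + 1) = z i n + lam n • (p i n - x n)) :
    ∃ xbar : H,
      (∃ u : ℕ → H, (∀ i ∈ Finset.Icc 1 m, u i ∈ A i xbar) ∧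
        (∑ i ∈ Finset.Icc 1 m, u i) + B xbar = 0) ∧
      WeakLim x xbar ∧
      Tendsto (fun n => B (x n)) atTop (nhds (B xbar)) ∧
      Tendsto (fun n => x (n + 1) - x n) atTop (nhds 0) :=
  statement16_general m A hA β hβ B hB hsol ω hω hωsum γ hγ α hα lam hlam a b hdiv herr J hJ z s p x
    hx hs hp hzr
end

section
/- Let H be a real Hilbert space, let A_1, A_2 : H → 2^H be maximally monotone with zer(A_1 + A_2) = {x : 0 ∈ A_1 x + A_2 x} nonempty, let γ > 0, let (λ_n) be a sequence in (0, 3/2), and let (b_{1,n}) and (b_{2,n}) be sequences in H such that Σ_n λ_n(3 − 2λ_n) = +∞ and Σ_n λ_n‖b_{i,n}‖ < +∞ for i = 1, 2. Let (z_{1,0}, z_{2,0}) ∈ H × H and for every n ∈ ℕ set x_n = (z_{1,n} + z_{2,n})/2, p_{1,n} = J_{2γA_1}(z_{2,n}) + b_{1,n}, p_{2,n} = J_{2γA_2}(z_{1,n}) + b_{2,n}, z_{1,n+1} = z_{1,n} + λ_n(p_{1,n} − x_n), z_{2,n+1} = z_{2,n} + λ_n(p_{2,n} − x_n). Then there exists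 x̄ ∈ zer(A_1 + A_2) such that x_n converges weakly to x̄ and x_{n+1} − x_n → 0 strongly. -/
/-!
On `H × H` with the `ℓ²` norm put `R (z₁, z₂) = (R₁ z₂, R₂ z₁)`, where `Rᵢ = 2 J_{2γAᵢ} - Id`
is the reflected resolvent; monotonicity of `Aᵢ` makes `Rᵢ`, hence `R`, nonexpansive. With
`zₙ = (z₁ₙ, z₂ₙ)` the scheme is the Krasnosel'skiĭ–Mann iteration
`zₙ₊₁ = zₙ + (λₙ/2) (R zₙ - zₙ) + λₙ (b₁ₙ, b₂ₙ)`, and `λ (3 - 2λ) ≤ 6 (λ/2) (1 - λ/2)` turns the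
divergence hypothesis into `∑ μₙ (1 - μₙ) = ∞` for `μₙ = λₙ/2`.

A point `w` is fixed by `R` iff `J₁ w₂ = J₂ w₁ = (w₁ + w₂)/2`, and this common value is a zero of
`A₁ + A₂`; conversely a zero `x` with `u ∈ A₁ x`, `-u ∈ A₂ x` gives the fixed point
`(x - 2γu, x + 2γu)`. The Krasnosel'skiĭ–Mann iterates are quasi-Fejér with respect to `Fix R`
and asymptotically regular, so by demiclosedness of `Id - R` and Opial's lemma `zₙ ⇀ w ∈ Fix R`;
`xₙ` is the mean of the two components of `zₙ`.
-/

open Filter Topology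
open scoped RealInnerProductSpace Pointwise

variable {H : Type*} [NormedAddCommGroup H] [InnerProductSpace ℝ H] [CompleteSpace H]

section RealSequences

theorem exists_tendsto_of_le_add_of_summable {a ε : ℕ → ℝ} (ha : ∀ n, 0 ≤ a n)
    (hε : Summable ε) (h : ∀ n, a (n + 1) ≤ a n + ε n) : ∃ L, Tendsto a atTop (𝓝 L) := by
  set t : ℕ → ℝ := fun n => ∑' k, ε (k + n)
  have ht (n : ℕ) : t n = ε n + t (n + 1) := by
    simpa [t, add_comm, add_left_comm, add_assoc] using
      ((summable_nat_add_iff n).2 hε).tsum_eq_zero_add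
  have ht0 : Tendsto t atTop (𝓝 0) := tendsto_sum_nat_add ε
  have hanti : Antitone fun n => a n + t n :=
    antitone_nat_of_succ_le fun n => by linarith [h n, ht n]
  obtain ⟨m, hm⟩ := ht0.bddBelow_range
  have hbdd : BddBelow (Set.range fun n => a n + t n) :=
    ⟨m, by rintro _ ⟨n, rfl⟩; linarith [ha n, hm ⟨n, rfl⟩]⟩
  exact ⟨_, by simpa using (tendsto_atTop_ciInf hanti hbdd).sub ht0⟩

theorem summable_of_le_mul_sub_add {a e δ : ℕ → ℝ} {K : ℝ} (hK : 0 ≤ K)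
    (ha : BddBelow (Set.range a)) (he : ∀ n, 0 ≤ e n) (hδ : Summable δ)
    (h : ∀ n, e n ≤ K * (a n - a (n + 1) + δ n)) : Summable e := by
  obtain ⟨m, hm⟩ := ha
  obtain ⟨C, hC⟩ := hδ.hasSum.tendsto_sum_nat.bddAbove_range
  refine summable_of_sum_range_le he (c := K * (a 0 - m + C)) fun n => ?_
  calc ∑ i ∈ Finset.range n, e i ≤ ∑ i ∈ Finset.range n, K * (a i - a (i + 1) + δ i) :=
        Finset.sum_le_sum fun i _ => h i
    _ = K * (a 0 - a n + ∑ i ∈ Finset.range n, δ i) := by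
        rw [← Finset.mul_sum, Finset.sum_add_distrib, Finset.sum_range_sub']
    _ ≤ K * (a 0 - m + C) := by
        gcongr
        · exact hm ⟨n, rfl⟩
        · exact hC ⟨n, rfl⟩

theorem eq_zero_of_tendsto_of_summable_mul {a w : ℕ → ℝ} {L : ℝ} (ha : Tendsto a atTop (𝓝 L))
    (hw : ∀ n, 0 ≤ w n) (hwa : Summable fun n => w n * a n) (hdiv : ¬ Summable w) : L = 0 := by
  by_contra hL
  have hL' : 0 < |L| := abs_pos.2 hL
  obtain ⟨N, hN⟩ := eventually_atTop.1 <|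
    ((continuous_abs.tendsto L).comp ha).eventually (eventually_gt_nhds (half_lt_self hL'))
  refine hdiv <| (summable_nat_add_iff N).1 <| Summable.of_nonneg_of_le (fun n => hw _)
    (fun n => ?_) (((summable_nat_add_iff N).2 hwa.abs).mul_left (2 / |L|))
  have haN : |L| / 2 < |a (n + N)| := hN (n + N) (Nat.le_add_left N n)
  rw [abs_mul, abs_of_nonneg (hw _), div_mul_eq_mul_div, le_div_iff₀ hL']
  nlinarith [hw (n + N)]

end RealSequences

section NormedGroup

variable {E : Type*} [SeminormedAddCommGroup E]

theorem exists_norm_le_of_tendsto_norm_sub {z : ℕ → E} {f : E} {ρ : ℝ}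
    (h : Tendsto (fun n => ‖z n - f‖) atTop (𝓝 ρ)) : ∃ M, ∀ n, ‖z n‖ ≤ M := by
  obtain ⟨B, hB⟩ := h.bddAbove_range
  exact ⟨B + ‖f‖, fun n => by linarith [norm_sub_norm_le (z n) f, hB ⟨n, rfl⟩]⟩

theorem LipschitzWith.norm_apply_add_sub_le {R : E → E} (hR : LipschitzWith 1 R) (y e : E) :
    ‖R (y + e) - (y + e)‖ ≤ ‖R y - y‖ + 2 * ‖e‖ := by
  calc ‖R (y + e) - (y + e)‖ = ‖(R (y + e) - R y) + (R y - y) - e‖ := by congr 1; abel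
    _ ≤ ‖R (y + e) - R y‖ + ‖R y - y‖ + ‖e‖ := _root_.norm_sub_le_of_le (norm_add_le _ _) le_rfl
    _ ≤ ‖R y - y‖ + 2 * ‖e‖ := by
        have := hR.norm_sub_le (y + e) y
        simp only [NNReal.coe_one, one_mul, add_sub_cancel_left] at this
        linarith

end NormedGroup

section InnerProductSpace

variable {E : Type*} [NormedAddCommGroup E] [InnerProductSpace ℝ E]

theorem norm_sub_le_norm_add_of_inner_nonneg {s t : E} (h : 0 ≤ ⟪s, t⟫) :
    ‖s - t‖ ≤ ‖s + t‖ := by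
  rw [← sq_le_sq₀ (norm_nonneg _) (norm_nonneg _), norm_sub_sq_real, norm_add_sq_real]
  linarith

theorem norm_add_smul_sub_sq (a b : E) (t : ℝ) :
    ‖a + t • (b - a)‖ ^ 2 = (1 - t) * ‖a‖ ^ 2 + t * ‖b‖ ^ 2 - t * (1 - t) * ‖b - a‖ ^ 2 := by
  simp only [← real_inner_self_eq_norm_sq, inner_add_left, inner_add_right, inner_sub_left,
    inner_sub_right, real_inner_smul_left, real_inner_smul_right, real_inner_comm a b]
  ring

theorem exists_strictMono_weakLim_of_norm_le_of_separableSpace [CompleteSpace E]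
    [TopologicalSpace.SeparableSpace E] (z : ℕ → E) (M : ℝ) (hz : ∀ n, ‖z n‖ ≤ M) :
    ∃ (w : E) (φ : ℕ → ℕ), StrictMono φ ∧ WeakLim (z ∘ φ) w := by
  let f (n : ℕ) : WeakDual ℝ E := WeakDual.toStrongDual.symm (InnerProductSpace.toDual ℝ E (z n))
  have hf (n : ℕ) : f n ∈ WeakDual.toStrongDual ⁻¹' Metric.closedBall 0 M := by
    simpa [f] using hz n
  obtain ⟨g, -, φ, hφ, hlim⟩ := WeakDual.isSeqCompact_closedBall ℝ E 0 M hf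
  refine ⟨(InnerProductSpace.toDual ℝ E).symm (WeakDual.toStrongDual g), φ, hφ, fun y => ?_⟩
  rw [InnerProductSpace.toDual_symm_apply]
  simpa [f, Function.comp_def] using ((WeakDual.eval_continuous y).tendsto g).comp hlim

theorem exists_strictMono_weakLim_of_norm_le [CompleteSpace E] (z : ℕ → E) (M : ℝ)
    (hz : ∀ n, ‖z n‖ ≤ M) : ∃ (w : E) (φ : ℕ → ℕ), StrictMono φ ∧ WeakLim (z ∘ φ) w := by
  obtain ⟨V, hzV, hVsep, hVclosed⟩ : ∃ V : Submodule ℝ E,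
      (∀ n, z n ∈ V) ∧ TopologicalSpace.IsSeparable (V : Set E) ∧ IsClosed (V : Set E) := by
    refine ⟨(Submodule.span ℝ (Set.range z)).topologicalClosure,
      fun n => Submodule.le_topologicalClosure _ (Submodule.subset_span ⟨n, rfl⟩), ?_,
      Submodule.isClosed_topologicalClosure _⟩
    rw [Submodule.topologicalClosure_coe]
    exact ((Set.countable_range z).isSeparable.span).closure
  have : CompleteSpace V := hVclosed.completeSpace_coe
  have : TopologicalSpace.SeparableSpace V := hVsep.separableSpace
  obtain ⟨w, φ, hφ, hw⟩ :=
    exists_strictMono_weakLim_of_norm_le_of_separableSpace (fun n => (⟨z n, hzV n⟩ : V)) M hz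
  refine ⟨w, φ, hφ, fun y => ?_⟩
  simpa using hw (V.orthogonalProjectionOnto y)

theorem eq_of_weakLim_comp_of_tendsto_norm_sub {z : ℕ → E} {w w' : E} {φ ψ : ℕ → ℕ}
    {ρ ρ' : ℝ} (hφ : Tendsto φ atTop atTop) (hψ : Tendsto ψ atTop atTop)
    (hw : WeakLim (z ∘ φ) w) (hw' : WeakLim (z ∘ ψ) w')
    (hρ : Tendsto (fun n => ‖z n - w‖) atTop (𝓝 ρ))
    (hρ' : Tendsto (fun n => ‖z n - w'‖) atTop (𝓝 ρ')) : w = w' := by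
  have hpol (n : ℕ) :
      ⟪z n, w - w'⟫ = (‖z n - w'‖ ^ 2 - ‖z n - w‖ ^ 2 + ‖w‖ ^ 2 - ‖w'‖ ^ 2) / 2 := by
    rw [norm_sub_sq_real, norm_sub_sq_real, inner_sub_right]
    ring
  have hlim : Tendsto (fun n => ⟪z n, w - w'⟫) atTop
      (𝓝 ((ρ' ^ 2 - ρ ^ 2 + ‖w‖ ^ 2 - ‖w'‖ ^ 2) / 2)) := by
    simp_rw [hpol]
    exact ((((hρ'.pow 2).sub (hρ.pow 2)).add_const _).sub_const _).div_const 2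
  have h₁ := tendsto_nhds_unique (hw (w - w')) (hlim.comp hφ)
  have h₂ := tendsto_nhds_unique (hw' (w - w')) (hlim.comp hψ)
  rw [← sub_eq_zero, ← inner_self_eq_zero (𝕜 := ℝ), inner_sub_left, h₁, h₂, sub_self]

/-- Opial's lemma. -/
theorem exists_mem_weakLim_of_tendsto_norm_sub [CompleteSpace E] {z : ℕ → E} {F : Set E}
    (hF : F.Nonempty) (hconv : ∀ f ∈ F, ∃ ρ, Tendsto (fun n => ‖z n - f‖) atTop (𝓝 ρ))
    (hclust : ∀ w φ, Tendsto φ atTop atTop → WeakLim (z ∘ φ) w → w ∈ F) :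
    ∃ w ∈ F, WeakLim z w := by
  obtain ⟨f, hf⟩ := hF
  obtain ⟨M, hM⟩ := exists_norm_le_of_tendsto_norm_sub (hconv f hf).choose_spec
  have hsub (ns : ℕ → ℕ) (hns : Tendsto ns atTop atTop) :
      ∃ w ∈ F, ∃ ms : ℕ → ℕ, StrictMono ms ∧ WeakLim (z ∘ ns ∘ ms) w := by
    obtain ⟨w, ms, hms, hw⟩ := exists_strictMono_weakLim_of_norm_le (z ∘ ns) M fun n => hM _
    exact ⟨w, hclust w _ (hns.comp hms.tendsto_atTop) hw, ms, hms, hw⟩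
  obtain ⟨w, hwF, φ, hφ, hw⟩ := hsub id tendsto_id
  refine ⟨w, hwF, fun y => tendsto_of_subseq_tendsto fun ns hns => ?_⟩
  obtain ⟨w', hw'F, ms, hms, hw'⟩ := hsub ns hns
  obtain ⟨ρ, hρ⟩ := hconv w hwF
  obtain ⟨ρ', hρ'⟩ := hconv w' hw'F
  have hww' : w = w' := eq_of_weakLim_comp_of_tendsto_norm_sub hφ.tendsto_atTop
    (hns.comp hms.tendsto_atTop) hw hw' hρ hρ'
  exact ⟨ms, hww' ▸ hw' y⟩

/-- The demiclosedness principle. -/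
theorem isFixedPt_of_weakLim_of_tendsto_sub {R : E → E} (hR : LipschitzWith 1 R) {z : ℕ → E}
    {w : E} {M : ℝ} (hM : ∀ n, ‖z n‖ ≤ M) (hw : WeakLim z w)
    (hres : Tendsto (fun n => R (z n) - z n) atTop (𝓝 0)) : Function.IsFixedPt R w := by
  set d : ℕ → ℝ := fun n => ‖R (z n) - z n‖
  have hd : Tendsto d atTop (𝓝 0) := tendsto_zero_iff_norm_tendsto_zero.1 hres
  have hbound (n : ℕ) : ‖w - R w‖ ^ 2
      ≤ d n ^ 2 + 2 * d n * (M + ‖w‖) - 2 * (⟪z n, w - R w⟫ - ⟪w, w - R w⟫) := by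
    have hsplit : ‖z n - R w‖ ^ 2 = ‖z n - w‖ ^ 2 + 2 * ⟪z n - w, w - R w⟫ + ‖w - R w‖ ^ 2 := by
      rw [← norm_add_sq_real, sub_add_sub_cancel]
    have htri : ‖z n - R w‖ ≤ d n + ‖z n - w‖ := by
      calc ‖z n - R w‖ ≤ ‖z n - R (z n)‖ + ‖R (z n) - R w‖ :=
            norm_sub_le_norm_sub_add_norm_sub _ _ _
        _ ≤ d n + ‖z n - w‖ :=
          add_le_add (norm_sub_rev _ _).le (by simpa using hR.norm_sub_le (z n) w)
    have hzw : ‖z n - w‖ ≤ M + ‖w‖ := (norm_sub_le _ _).trans (by linarith [hM n])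
    have hd0 : 0 ≤ d n := norm_nonneg _
    rw [inner_sub_left] at hsplit
    nlinarith [pow_le_pow_left₀ (norm_nonneg _) htri 2, mul_le_mul_of_nonneg_left hzw hd0]
  have hlim : Tendsto (fun n => d n ^ 2 + 2 * d n * (M + ‖w‖)
      - 2 * (⟪z n, w - R w⟫ - ⟪w, w - R w⟫)) atTop (𝓝 0) := by
    simpa using ((hd.pow 2).add ((hd.const_mul 2).mul_const (M + ‖w‖))).sub
      (((hw (w - R w)).sub_const ⟪w, w - R w⟫).const_mul 2)
  have hle : ‖w - R w‖ ^ 2 ≤ 0 := ge_of_tendsto hlim (Eventually.of_forall hbound)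
  have : ‖w - R w‖ = 0 := by nlinarith [norm_nonneg (w - R w)]
  exact (sub_eq_zero.1 (norm_eq_zero.1 this)).symm

end InnerProductSpace

section Averaged

variable {E : Type*} [NormedAddCommGroup E] [InnerProductSpace ℝ E] {R : E → E} {t : ℝ}

theorem norm_averaged_sub_sq_le (hR : LipschitzWith 1 R) (ht : t ∈ Set.Icc (0 : ℝ) 1)
    {f : E} (hf : Function.IsFixedPt R f) (x : E) :
    ‖x + t • (R x - x) - f‖ ^ 2 ≤ ‖x - f‖ ^ 2 - t * (1 - t) * ‖R x - x‖ ^ 2 := by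
  have hRx : ‖R x - f‖ ≤ ‖x - f‖ := by simpa [hf.eq] using hR.norm_sub_le x f
  have key := norm_add_smul_sub_sq (x - f) (R x - f) t
  rw [sub_sub_sub_cancel_right, sub_add_eq_add_sub] at key
  rw [key]
  nlinarith [ht.1, ht.2, pow_le_pow_left₀ (norm_nonneg _) hRx 2]

theorem norm_averaged_sub_le (hR : LipschitzWith 1 R) (ht : t ∈ Set.Icc (0 : ℝ) 1)
    {f : E} (hf : Function.IsFixedPt R f) (x : E) : ‖x + t • (R x - x) - f‖ ≤ ‖x - f‖ := by
  rw [← sq_le_sq₀ (norm_nonneg _) (norm_nonneg _)]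
  have := mul_nonneg (mul_nonneg ht.1 (sub_nonneg.2 ht.2)) (sq_nonneg ‖R x - x‖)
  linarith [norm_averaged_sub_sq_le hR ht hf x]

theorem norm_sub_averaged_le (hR : LipschitzWith 1 R) (ht : t ∈ Set.Icc (0 : ℝ) 1) (x : E) :
    ‖R (x + t • (R x - x)) - (x + t • (R x - x))‖ ≤ ‖R x - x‖ := by
  calc ‖R (x + t • (R x - x)) - (x + t • (R x - x))‖
      = ‖(R (x + t • (R x - x)) - R x) + (1 - t) • (R x - x)‖ := by congr 1; module
    _ ≤ ‖x + t • (R x - x) - x‖ + (1 - t) * ‖R x - x‖ := by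
        refine (norm_add_le _ _).trans (add_le_add ?_ ?_)
        · simpa only [NNReal.coe_one, one_mul] using hR.norm_sub_le _ x
        · rw [norm_smul, Real.norm_of_nonneg (sub_nonneg.2 ht.2)]
    _ = ‖R x - x‖ := by
        rw [add_sub_cancel_left, norm_smul, Real.norm_of_nonneg ht.1]
        ring

end Averaged

namespace KrasnoselskiiMann

variable {E : Type*} [NormedAddCommGroup E] [InnerProductSpace ℝ E]
  {R : E → E} {μ : ℕ → ℝ} {c z : ℕ → E}

theorem norm_sub_succ_le (hR : LipschitzWith 1 R) (hμ : ∀ n, μ n ∈ Set.Icc (0 : ℝ) 1)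
    (hz : ∀ n, z (n + 1) = z n + μ n • (R (z n) - z n) + c n) {f : E}
    (hf : Function.IsFixedPt R f) (n : ℕ) : ‖z (n + 1) - f‖ ≤ ‖z n - f‖ + ‖c n‖ := by
  rw [hz, add_sub_right_comm]
  exact (norm_add_le _ _).trans (add_le_add (norm_averaged_sub_le hR (hμ n) hf _) le_rfl)

theorem tendsto_norm_sub (hR : LipschitzWith 1 R) (hμ : ∀ n, μ n ∈ Set.Icc (0 : ℝ) 1)
    (hc : Summable fun n => ‖c n‖) (hz : ∀ n, z (n + 1) = z n + μ n • (R (z n) - z n) + c n)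
    {f : E} (hf : Function.IsFixedPt R f) : ∃ ρ, Tendsto (fun n => ‖z n - f‖) atTop (𝓝 ρ) :=
  exists_tendsto_of_le_add_of_summable (fun _ => norm_nonneg _) hc
    (norm_sub_succ_le hR hμ hz hf)

theorem summable_mul_norm_apply_sub_sq (hR : LipschitzWith 1 R)
    (hμ : ∀ n, μ n ∈ Set.Icc (0 : ℝ) 1)
    (hc : Summable fun n => ‖c n‖) (hz : ∀ n, z (n + 1) = z n + μ n • (R (z n) - z n) + c n)
    {f : E} (hf : Function.IsFixedPt R f) :
    Summable fun n => μ n * (1 - μ n) * ‖R (z n) - z n‖ ^ 2 := by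
  obtain ⟨ρ, hρ⟩ := tendsto_norm_sub hR hμ hc hz hf
  obtain ⟨B, hB⟩ := hρ.bddAbove_range
  have hB' (n : ℕ) : ‖z n - f‖ ≤ B := hB ⟨n, rfl⟩
  refine summable_of_le_mul_sub_add (K := 2 * B) (by linarith [norm_nonneg (z 0 - f), hB' 0])
    hρ.bddBelow_range (fun n => mul_nonneg (mul_nonneg (hμ n).1 (sub_nonneg.2 (hμ n).2))
    (sq_nonneg _)) hc fun n => ?_
  have hsq := norm_averaged_sub_sq_le hR (hμ n) hf (z n)
  have hu := norm_averaged_sub_le hR (hμ n) hf (z n)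
  have hsucc : ‖z (n + 1) - f‖ ≤ ‖z n + μ n • (R (z n) - z n) - f‖ + ‖c n‖ := by
    rw [hz, add_sub_right_comm]
    exact norm_add_le _ _
  have hB0 : 0 ≤ B := (norm_nonneg _).trans (hB' 0)
  nlinarith [mul_le_mul_of_nonneg_left (add_le_add (hB' n) (hu.trans (hB' n)))
    (sub_nonneg.2 hu), mul_le_mul_of_nonneg_left hsucc hB0]

theorem tendsto_apply_sub_nhds_zero (hR : LipschitzWith 1 R) (hfix : ∃ f, Function.IsFixedPt R f)
    (hμ : ∀ n, μ n ∈ Set.Icc (0 : ℝ) 1) (hdiv : ¬ Summable fun n => μ n * (1 - μ n))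
    (hc : Summable fun n => ‖c n‖) (hz : ∀ n, z (n + 1) = z n + μ n • (R (z n) - z n) + c n) :
    Tendsto (fun n => R (z n) - z n) atTop (𝓝 0) := by
  obtain ⟨f, hf⟩ := hfix
  obtain ⟨L, hL⟩ : ∃ L, Tendsto (fun n => ‖R (z n) - z n‖) atTop (𝓝 L) :=
    exists_tendsto_of_le_add_of_summable (fun _ => norm_nonneg _) (hc.mul_left 2) fun n => by
      simpa [hz] using hR.norm_apply_add_sub_le (z n + μ n • (R (z n) - z n)) (c n)
        |>.trans (add_le_add (norm_sub_averaged_le hR (hμ n) (z n)) le_rfl)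
  have hL0 : L ^ 2 = 0 := eq_zero_of_tendsto_of_summable_mul (hL.pow 2)
    (fun n => mul_nonneg (hμ n).1 (sub_nonneg.2 (hμ n).2))
    (summable_mul_norm_apply_sub_sq hR hμ hc hz hf) hdiv
  rw [tendsto_zero_iff_norm_tendsto_zero, ← pow_eq_zero_iff two_ne_zero |>.1 hL0]
  exact hL

theorem tendsto_succ_sub (hμ : ∀ n, μ n ∈ Set.Icc (0 : ℝ) 1) (hc : Summable fun n => ‖c n‖)
    (hz : ∀ n, z (n + 1) = z n + μ n • (R (z n) - z n) + c n)
    (hres : Tendsto (fun n => R (z n) - z n) atTop (𝓝 0)) :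
    Tendsto (fun n => z (n + 1) - z n) atTop (𝓝 0) := by
  have hc0 : Tendsto c atTop (𝓝 0) := tendsto_zero_iff_norm_tendsto_zero.2 hc.tendsto_atTop_zero
  refine squeeze_zero_norm (fun n => ?_) (by simpa using hres.norm.add hc0.norm)
  rw [hz, add_sub_right_comm, add_sub_cancel_left]
  refine (norm_add_le _ _).trans (add_le_add ?_ le_rfl)
  rw [norm_smul, Real.norm_of_nonneg (hμ n).1]
  exact mul_le_of_le_one_left (norm_nonneg _) (hμ n).2

theorem exists_isFixedPt_weakLim [CompleteSpace E] (hR : LipschitzWith 1 R)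
    (hfix : ∃ f, Function.IsFixedPt R f) (hμ : ∀ n, μ n ∈ Set.Icc (0 : ℝ) 1)
    (hdiv : ¬ Summable fun n => μ n * (1 - μ n)) (hc : Summable fun n => ‖c n‖)
    (hz : ∀ n, z (n + 1) = z n + μ n • (R (z n) - z n) + c n) :
    ∃ w, Function.IsFixedPt R w ∧ WeakLim z w ∧ Tendsto (fun n => R (z n) - z n) atTop (𝓝 0) := by
  have hres := tendsto_apply_sub_nhds_zero hR hfix hμ hdiv hc hz
  obtain ⟨w, hw_fix, hw⟩ := exists_mem_weakLim_of_tendsto_norm_sub (F := Function.fixedPoints R)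
    hfix (fun f hf => tendsto_norm_sub hR hμ hc hz hf) fun w φ hφ hw => by
      obtain ⟨f, hf⟩ := hfix
      obtain ⟨M, hM⟩ :=
        exists_norm_le_of_tendsto_norm_sub (tendsto_norm_sub hR hμ hc hz hf).choose_spec
      exact isFixedPt_of_weakLim_of_tendsto_sub hR (fun n => hM _) hw (hres.comp hφ)
  exact ⟨w, hw_fix, hw, hres⟩

end KrasnoselskiiMann

section Resolvent

variable {E : Type*} [NormedAddCommGroup E] [InnerProductSpace ℝ E]

/-- `J` is the resolvent `J_{cA} = (Id + cA)⁻¹`. -/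
def IsResolvent (A : E → Set E) (c : ℝ) (J : E → E) : Prop :=
  ∀ x p, J x = p ↔ ∃ u ∈ A p, x - p = c • u

def reflectedResolvent (J : E → E) (x : E) : E := (2 : ℝ) • J x - x

variable {A : E → Set E} {c : ℝ} {J : E → E}

theorem IsResolvent.inner_sub_nonneg (hJ : IsResolvent A c J) (hA : IsMonotoneOp A)
    (hc : 0 ≤ c) (a b : E) : 0 ≤ ⟪J a - J b, (a - J a) - (b - J b)⟫ := by
  obtain ⟨u, hu, hau⟩ := (hJ a (J a)).1 rfl
  obtain ⟨v, hv, hbv⟩ := (hJ b (J b)).1 rfl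
  rw [hau, hbv, ← smul_sub, real_inner_smul_right]
  exact mul_nonneg hc (hA _ _ _ _ hu hv)

theorem IsResolvent.lipschitzWith_reflectedResolvent (hJ : IsResolvent A c J)
    (hA : IsMonotoneOp A) (hc : 0 ≤ c) : LipschitzWith 1 (reflectedResolvent J) := by
  refine LipschitzWith.of_dist_le_mul fun a b => ?_
  rw [dist_eq_norm, dist_eq_norm, NNReal.coe_one, one_mul]
  calc ‖reflectedResolvent J a - reflectedResolvent J b‖
      = ‖(J a - J b) - ((a - J a) - (b - J b))‖ := by
        simp only [reflectedResolvent]; congr 1; module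
    _ ≤ ‖(J a - J b) + ((a - J a) - (b - J b))‖ :=
        norm_sub_le_norm_add_of_inner_nonneg (hJ.inner_sub_nonneg hA hc a b)
    _ = ‖a - b‖ := by congr 1; abel

end Resolvent

section ProductSpace

variable {E : Type*} [NormedAddCommGroup E]

def crossMap (R₁ R₂ : E → E) (q : WithLp 2 (E × E)) : WithLp 2 (E × E) :=
  WithLp.toLp 2 (R₁ q.snd, R₂ q.fst)

theorem lipschitzWith_crossMap {R₁ R₂ : E → E} (h₁ : LipschitzWith 1 R₁)
    (h₂ : LipschitzWith 1 R₂) : LipschitzWith 1 (crossMap R₁ R₂) := by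
  refine LipschitzWith.of_dist_le_mul fun a b => ?_
  rw [dist_eq_norm, dist_eq_norm, NNReal.coe_one, one_mul,
    ← sq_le_sq₀ (norm_nonneg _) (norm_nonneg _), WithLp.prod_norm_sq_eq_of_L2,
    WithLp.prod_norm_sq_eq_of_L2]
  have e₁ := h₁.norm_sub_le a.snd b.snd
  have e₂ := h₂.norm_sub_le a.fst b.fst
  simp only [NNReal.coe_one, one_mul] at e₁ e₂
  simp only [crossMap, WithLp.sub_fst, WithLp.sub_snd, WithLp.toLp_fst, WithLp.toLp_snd]
  nlinarith [norm_nonneg (R₁ a.snd - R₁ b.snd), norm_nonneg (R₂ a.fst - R₂ b.fst)]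

theorem norm_toLp_le_add (a b : E) : ‖WithLp.toLp 2 (a, b)‖ ≤ ‖a‖ + ‖b‖ := by
  rw [← sq_le_sq₀ (norm_nonneg _) (by positivity), WithLp.prod_norm_sq_eq_of_L2]
  simp only [WithLp.toLp_fst, WithLp.toLp_snd]
  nlinarith [norm_nonneg a, norm_nonneg b]

variable [InnerProductSpace ℝ E]

noncomputable def pairMean (q : WithLp 2 (E × E)) : E := (2 : ℝ)⁻¹ • (q.fst + q.snd)

theorem norm_pairMean_sub_le (a b : WithLp 2 (E × E)) :
    ‖pairMean a - pairMean b‖ ≤ ‖a - b‖ := by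
  have hsub : pairMean a - pairMean b = (2 : ℝ)⁻¹ • ((a - b).fst + (a - b).snd) := by
    simp only [pairMean, WithLp.sub_fst, WithLp.sub_snd]
    module
  rw [hsub, norm_smul, norm_inv, Real.norm_two, inv_mul_le_iff₀ two_pos]
  exact (norm_add_le _ _).trans
    (by linarith [WithLp.norm_fst_le _ (a - b), WithLp.norm_snd_le _ (a - b)])

theorem WeakLim.pairMean {z : ℕ → WithLp 2 (E × E)} {w : WithLp 2 (E × E)} (h : WeakLim z w) :
    WeakLim (fun n => pairMean (z n)) (pairMean w) := fun y => by
  simpa [_root_.pairMean, WithLp.prod_inner_apply, real_inner_smul_left, inner_add_left,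
    mul_add] using
    (h (WithLp.toLp 2 (y, y))).const_mul (2 : ℝ)⁻¹

variable {A₁ A₂ : E → Set E} {c : ℝ} {J₁ J₂ : E → E}

theorem isFixedPt_crossMap_iff {w : WithLp 2 (E × E)} :
    Function.IsFixedPt (crossMap (reflectedResolvent J₁) (reflectedResolvent J₂)) w ↔
      J₁ w.snd = pairMean w ∧ J₂ w.fst = pairMean w := by
  have key (p a b : E) : (2 : ℝ) • p - b = a ↔ p = (2 : ℝ)⁻¹ • (a + b) := by
    constructor <;> rintro rfl <;> module
  rw [Function.IsFixedPt, crossMap, ← (WithLp.ofLp_injective 2).eq_iff, Prod.ext_iff]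
  simp only [reflectedResolvent, key, pairMean]
  rw [add_comm w.ofLp.2]
  rfl

theorem exists_isFixedPt_crossMap (hJ₁ : IsResolvent A₁ c J₁) (hJ₂ : IsResolvent A₂ c J₂)
    (h : ∃ x, ∃ u ∈ A₁ x, ∃ v ∈ A₂ x, u + v = 0) :
    ∃ w, Function.IsFixedPt (crossMap (reflectedResolvent J₁) (reflectedResolvent J₂)) w := by
  obtain ⟨x, u, hu, v, hv, huv⟩ := h
  have hmean : pairMean (WithLp.toLp 2 (x + c • v, x + c • u)) = x := by
    simp only [pairMean, WithLp.toLp_fst, WithLp.toLp_snd, eq_neg_of_add_eq_zero_right huv]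
    module
  refine ⟨WithLp.toLp 2 (x + c • v, x + c • u), isFixedPt_crossMap_iff.2 ⟨?_, ?_⟩⟩ <;>
    rw [hmean]
  · exact (hJ₁ _ _).2 ⟨u, hu, add_sub_cancel_left _ _⟩
  · exact (hJ₂ _ _).2 ⟨v, hv, add_sub_cancel_left _ _⟩

theorem exists_zero_of_isFixedPt_crossMap (hJ₁ : IsResolvent A₁ c J₁)
    (hJ₂ : IsResolvent A₂ c J₂) (hc : c ≠ 0) {w : WithLp 2 (E × E)}
    (hw : Function.IsFixedPt (crossMap (reflectedResolvent J₁) (reflectedResolvent J₂)) w) :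
    ∃ u ∈ A₁ (pairMean w), ∃ v ∈ A₂ (pairMean w), u + v = 0 := by
  obtain ⟨h₁, h₂⟩ := isFixedPt_crossMap_iff.1 hw
  obtain ⟨u, hu, hwu⟩ := (hJ₁ _ _).1 h₁
  obtain ⟨v, hv, hwv⟩ := (hJ₂ _ _).1 h₂
  refine ⟨u, hu, v, hv, (smul_eq_zero.1 ?_).resolve_left hc⟩
  rw [smul_add, ← hwu, ← hwv, pairMean]
  module

end ProductSpace

theorem statement17
    (A₁ A₂ : H → Set H) (hA₁ : IsMaxMonotoneOp A₁) (hA₂ : IsMaxMonotoneOp A₂)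
    (hne : ∃ x : H, ∃ u ∈ A₁ x, ∃ v ∈ A₂ x, u + v = 0)
    (γ : ℝ) (hγ : 0 < γ)
    (lam : ℕ → ℝ) (hlam : ∀ n, lam n ∈ Set.Ioo (0 : ℝ) (3 / 2))
    (b₁ b₂ : ℕ → H)
    (hdiv : ¬ Summable (fun n => lam n * (3 - 2 * lam n)))
    (herr₁ : Summable (fun n => lam n * ‖b₁ n‖))
    (herr₂ : Summable (fun n => lam n * ‖b₂ n‖))
    (J₁ J₂ : H → H)
    (hJ₁ : ∀ x p : H, J₁ x = p ↔ ∃ u ∈ A₁ p, x - p = (2 * γ) • u)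
    (hJ₂ : ∀ x p : H, J₂ x = p ↔ ∃ u ∈ A₂ p, x - p = (2 * γ) • u)
    (z₁ z₂ x p₁ p₂ : ℕ → H)
    (hx : ∀ n, x n = (2 : ℝ)⁻¹ • (z₁ n + z₂ n))
    (hp₁ : ∀ n, p₁ n = J₁ (z₂ n) + b₁ n)
    (hp₂ : ∀ n, p₂ n = J₂ (z₁ n) + b₂ n)
    (hz₁ : ∀ n, z₁ (n + 1) = z₁ n + lam n • (p₁ n - x n))
    (hz₂ : ∀ n, z₂ (n + 1) = z₂ n + lam n • (p₂ n - x n)) :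
    ∃ xbar : H, (∃ u ∈ A₁ xbar, ∃ v ∈ A₂ xbar, u + v = 0) ∧
      WeakLim x xbar ∧ Tendsto (fun n => x (n + 1) - x n) atTop (nhds 0) := by
  set R := crossMap (reflectedResolvent J₁) (reflectedResolvent J₂)
  set Z : ℕ → WithLp 2 (H × H) := fun n => WithLp.toLp 2 (z₁ n, z₂ n)
  set e : ℕ → WithLp 2 (H × H) := fun n => lam n • WithLp.toLp 2 (b₁ n, b₂ n)
  have hR : LipschitzWith 1 R := lipschitzWith_crossMap
    (IsResolvent.lipschitzWith_reflectedResolvent hJ₁ hA₁.1 (by positivity))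
    (IsResolvent.lipschitzWith_reflectedResolvent hJ₂ hA₂.1 (by positivity))
  have hμ (n : ℕ) : lam n / 2 ∈ Set.Icc (0 : ℝ) 1 :=
    ⟨by linarith [(hlam n).1], by linarith [(hlam n).2]⟩
  have hμdiv : ¬ Summable fun n => lam n / 2 * (1 - lam n / 2) := fun h =>
    hdiv <| (h.mul_left 6).of_nonneg_of_le
      (fun n => mul_nonneg (hlam n).1.le (by linarith [(hlam n).2]))
      (fun n => by nlinarith [sq_nonneg (lam n)])
  have he : Summable fun n => ‖e n‖ :=
    (herr₁.add herr₂).of_nonneg_of_le (fun _ => norm_nonneg _) fun n => by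
      rw [norm_smul, Real.norm_of_nonneg (hlam n).1.le, ← mul_add]
      exact mul_le_mul_of_nonneg_left (norm_toLp_le_add _ _) (hlam n).1.le
  have hZ (n : ℕ) : Z (n + 1) = Z n + (lam n / 2) • (R (Z n) - Z n) + e n := by
    refine WithLp.ofLp_injective 2 (Prod.ext ?_ ?_)
    · simp [Z, R, e, crossMap, reflectedResolvent, hz₁, hp₁, hx]
      module
    · simp [Z, R, e, crossMap, reflectedResolvent, hz₂, hp₂, hx]
      module
  obtain ⟨w, hw_fix, hZw, hres⟩ := KrasnoselskiiMann.exists_isFixedPt_weakLim hR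
    (exists_isFixedPt_crossMap hJ₁ hJ₂ hne) hμ hμdiv he hZ
  obtain rfl : x = fun n => pairMean (Z n) := funext hx
  refine ⟨pairMean w, exists_zero_of_isFixedPt_crossMap hJ₁ hJ₂ (by positivity) hw_fix,
    hZw.pairMean, ?_⟩
  exact squeeze_zero_norm (fun n => norm_pairMean_sub_le _ _)
    (by simpa using (KrasnoselskiiMann.tendsto_succ_sub hμ he hZ hres).norm)
end
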